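/- arXiv:1706.09882 — 7 statements merged into one kernel-verified Lean document; each statement's English description precedes it below -/
import Mathlib

section
/- Let n = d₁ + d₂ with d₁, d₂ ≥ 1, and let A, N₁, …, N_m ∈ ℂ^{n×n}, B ∈ ℂ^{n×m}, C ∈ ℂ^{l×n}. Suppose: (i) A is Hurwitz; (ii) the diagonal matrix Σ = diag(σ₁, …, σ_n) with all σ_i > 0 satisfies both generalized Lyapunov equations A Σ + Σ A* + Σ_{k=1}^m N_k Σ N_k* + B B* = 0 and A* Σ + Σ A + Σ_{k=1}^m N_k* Σ N_k + C* C = 0; (iii) the pair (A,B) is controllable and the pair (A,C) is observable; (iv) the sets {σ₁, …, σ_{d₁}} and {σ_{d₁+1}, …, σ_n} are disjoint. Then every eigenvalue of the lower-right d₂×d₂ block A₂₂ of A (rows and columns d₁+1, …, n) has strictly negative real part, i.e. A₂₂ is Hurwitz. -/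
/-!
Suppose `A₂₂ v = μ v` with `v ≠ 0` and `0 ≤ Re μ`, and put `x = (0, v)`. As `Σ x` lives on the
second block and `A x - μ x` on the first, `x* Σ A x = μ x* Σ x`, so the observability equation
reads `2 Re μ · x* Σ x + x* R x = 0` with `R = ∑ N_k* Σ N_k + C* C ⪰ 0`. Hence `Re μ = 0` and
`R x = 0`, i.e. `A* Σ x = -Σ A x`. The same argument for the controllability equation at `Σ x`
(with `A*` and `-μ`) gives `A Σ² x = Σ² A x`: the `μ`-eigenspace of `A₂₂` is `Σ₂²`-invariant,
and on it `A₁₂ Σ₂² = Σ₁² A₁₂`. For a common eigenvector, `Σ₂² v = σ_j² v`, and `σ_j²` is not a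
diagonal entry of `Σ₁²`, so `A₁₂ v = 0`. Then `(0, v)` is an eigenvector of `A` for `μ`,
contradicting that `A` is Hurwitz.
-/

open Matrix
open scoped ComplexOrder

theorem Module.End.exists_hasEigenvector_of_mapsTo {K V : Type*} [Field K] [IsAlgClosed K]
    [AddCommGroup V] [Module K V] [FiniteDimensional K V] {f g : Module.End K V} {μ : K}
    (hμ : f.HasEigenvalue μ) (hg : Set.MapsTo g (f.eigenspace μ) (f.eigenspace μ)) :
    ∃ v c, f.HasEigenvector μ v ∧ g.HasEigenvector c v := by
  have : Nontrivial (f.eigenspace μ) := Submodule.nontrivial_iff_ne_bot.mpr hμ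
  obtain ⟨c, hc⟩ := Module.End.exists_eigenvalue (g.restrict hg)
  obtain ⟨⟨v, hvE⟩, hv⟩ := hc.exists_hasEigenvector
  have hv0 : v ≠ 0 := fun h => hv.2 (by simpa using h)
  refine ⟨v, c, ⟨hvE, hv0⟩, ?_, hv0⟩
  exact Module.End.mem_eigenspace_iff.mpr (congrArg Subtype.val hv.apply_eq_smul)

namespace Matrix

section Eigenvectors

variable {K n : Type*} [Field K] [Fintype n] [DecidableEq n]

theorem hasEigenvector_toLin'_iff {M : Matrix n n K} {μ : K} {v : n → K} :
    Module.End.HasEigenvector M.toLin' μ v ↔ M *ᵥ v = μ • v ∧ v ≠ 0 := by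
  simp [Module.End.hasEigenvector_iff]

theorem mem_spectrum_iff_exists_mulVec_eq_smul {M : Matrix n n K} {μ : K} :
    μ ∈ spectrum K M ↔ ∃ v ≠ 0, M *ᵥ v = μ • v := by
  rw [← spectrum_toLin', ← Module.End.hasEigenvalue_iff_mem_spectrum]
  refine ⟨fun h => ?_, fun ⟨v, hv0, hv⟩ => Module.End.hasEigenvalue_of_hasEigenvector
    (hasEigenvector_toLin'_iff.mpr ⟨hv, hv0⟩)⟩
  obtain ⟨v, hv⟩ := h.exists_hasEigenvector
  exact ⟨v, (hasEigenvector_toLin'_iff.mp hv).2, (hasEigenvector_toLin'_iff.mp hv).1⟩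

theorem exists_mulVec_eq_smul_of_mapsTo [IsAlgClosed K] {M N : Matrix n n K} {μ : K}
    (hμ : μ ∈ spectrum K M) (hN : ∀ v, M *ᵥ v = μ • v → M *ᵥ (N *ᵥ v) = μ • N *ᵥ v) :
    ∃ v ≠ 0, M *ᵥ v = μ • v ∧ ∃ c ∈ spectrum K N, N *ᵥ v = c • v := by
  rw [← spectrum_toLin', ← Module.End.hasEigenvalue_iff_mem_spectrum] at hμ
  obtain ⟨v, c, hMv, hNv⟩ := Module.End.exists_hasEigenvector_of_mapsTo (g := N.toLin') hμ
    fun v hv => by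
      simp only [SetLike.mem_coe, Module.End.mem_eigenspace_iff, toLin'_apply] at hv ⊢
      exact hN v hv
  rw [hasEigenvector_toLin'_iff] at hMv hNv
  exact ⟨v, hMv.2, hMv.1, c, mem_spectrum_iff_exists_mulVec_eq_smul.mpr ⟨v, hNv.2, hNv.1⟩, hNv.1⟩

theorem eq_zero_of_diagonal_mulVec_eq_smul {d : n → K} {c : K} {w : n → K}
    (h : diagonal d *ᵥ w = c • w) (hc : ∀ i, d i ≠ c) : w = 0 := by
  by_contra hw
  obtain ⟨i, rfl⟩ : c ∈ Set.range d := by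
    rw [← spectrum_diagonal]
    exact mem_spectrum_iff_exists_mulVec_eq_smul.mpr ⟨w, hw, h⟩
  exact hc i rfl

end Eigenvectors

section Lyapunov

variable {n : Type*} [Fintype n] {A P R : Matrix n n ℂ} {x : n → ℂ} {μ : ℂ}

theorem dotProduct_mulVec_eq_of_lyapunov (hP : P.IsHermitian) (h : Aᴴ * P + P * A + R = 0)
    (hx : star (P *ᵥ x) ⬝ᵥ (A *ᵥ x - μ • x) = 0) :
    star x ⬝ᵥ R *ᵥ x = -(2 * μ.re) * (star x ⬝ᵥ P *ᵥ x) := by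
  have hPx : star (P *ᵥ x) = star x ᵥ* P := by rw [star_mulVec, hP.eq]
  have hPxA : star (P *ᵥ x) ⬝ᵥ A *ᵥ x = μ * (star x ⬝ᵥ P *ᵥ x) := by
    rw [dotProduct_sub, dotProduct_smul, sub_eq_zero] at hx
    rw [hx, smul_eq_mul, hPx, ← dotProduct_mulVec]
  have hreal : star (star x ⬝ᵥ P *ᵥ x) = star x ⬝ᵥ P *ᵥ x :=
    Complex.conj_eq_iff_im.mpr (hP.im_star_dotProduct_mulVec_self x)
  have hAP : star x ⬝ᵥ Aᴴ *ᵥ (P *ᵥ x) = star μ * (star x ⬝ᵥ P *ᵥ x) := by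
    rw [star_dotProduct, star_mulVec, conjTranspose_conjTranspose, ← dotProduct_mulVec, hPxA,
      star_mul', hreal]
  have hPA : star x ⬝ᵥ P *ᵥ (A *ᵥ x) = μ * (star x ⬝ᵥ P *ᵥ x) := by
    rw [dotProduct_mulVec, ← hPx, hPxA]
  rw [eq_neg_of_add_eq_zero_right h, neg_mulVec, add_mulVec, ← mulVec_mulVec, ← mulVec_mulVec,
    dotProduct_neg, dotProduct_add, hAP, hPA, ← add_mul, add_comm, Complex.star_def,
    Complex.add_conj]
  push_cast
  ring

theorem re_nonpos_of_lyapunov (hP : P.PosDef) (hR : R.PosSemidef) (h : Aᴴ * P + P * A + R = 0)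
    (hx0 : x ≠ 0) (hx : star (P *ᵥ x) ⬝ᵥ (A *ᵥ x - μ • x) = 0) : μ.re ≤ 0 := by
  have hRx := (Complex.le_def.mp (hR.dotProduct_mulVec_nonneg x)).1
  have hPx := (Complex.lt_def.mp (hP.dotProduct_mulVec_pos hx0)).1
  rw [dotProduct_mulVec_eq_of_lyapunov hP.isHermitian h hx] at hRx
  norm_num at hRx
  exact nonpos_of_mul_nonpos_left (by linarith) hPx

theorem lyapunov_mulVec_eq_zero (hP : P.IsHermitian) (hR : R.PosSemidef)
    (h : Aᴴ * P + P * A + R = 0) (hx : star (P *ᵥ x) ⬝ᵥ (A *ᵥ x - μ • x) = 0) (hμ : μ.re = 0) :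
    Aᴴ *ᵥ (P *ᵥ x) + P *ᵥ (A *ᵥ x) = 0 := by
  have hRx : R *ᵥ x = 0 := by
    rw [← hR.dotProduct_mulVec_zero_iff, dotProduct_mulVec_eq_of_lyapunov hP h hx, hμ]
    simp
  simpa [add_mulVec, mulVec_mulVec, hRx] using congrArg (· *ᵥ x) h

end Lyapunov

section Blocks

variable {α β : Type*}

theorem zero_sumElim_ne_zero {R : Type*} [Zero R] {v : β → R} (hv : v ≠ 0) :
    (0 : α → R) ⊕ᵥ v ≠ 0 :=
  fun h => hv (by simpa using congrArg (· ∘ Sum.inr) h)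

variable [Fintype α] [Fintype β]

theorem mulVec_zero_sumElim {R : Type*} [NonUnitalNonAssocSemiring R]
    (M : Matrix (α ⊕ β) (α ⊕ β) R) (v : β → R) :
    M *ᵥ ((0 : α → R) ⊕ᵥ v) = (M.toBlocks₁₂ *ᵥ v) ⊕ᵥ (M.toBlocks₂₂ *ᵥ v) := by
  conv_lhs => rw [← fromBlocks_toBlocks M]
  simp [fromBlocks_mulVec]

variable [DecidableEq α] [DecidableEq β] {A : Matrix (α ⊕ β) (α ⊕ β) ℂ} {v : β → ℂ} {μ : ℂ}

theorem star_diagonal_mulVec_dotProduct_eq_zero (hv : A.toBlocks₂₂ *ᵥ v = μ • v)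
    (d d' : α ⊕ β → ℂ) :
    star (diagonal d *ᵥ ((0 : α → ℂ) ⊕ᵥ v)) ⬝ᵥ
      diagonal d' *ᵥ (A *ᵥ ((0 : α → ℂ) ⊕ᵥ v) - μ • ((0 : α → ℂ) ⊕ᵥ v)) = 0 := by
  rw [mulVec_zero_sumElim A, hv]
  simp [dotProduct, Fintype.sum_sum_type, mulVec_diagonal]

theorem diagonal_mulVec_sumElim {R : Type*} [NonUnitalNonAssocSemiring R] (d : α ⊕ β → R)
    (u : α → R) (w : β → R) :
    diagonal d *ᵥ (u ⊕ᵥ w) = (diagonal (d ∘ Sum.inl) *ᵥ u) ⊕ᵥ (diagonal (d ∘ Sum.inr) *ᵥ w) := by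
  ext (i | j) <;> simp [mulVec_diagonal]

theorem mem_spectrum_of_toBlocks₁₂_mulVec_eq_zero (hv0 : v ≠ 0) (hv : A.toBlocks₂₂ *ᵥ v = μ • v)
    (hA₁₂ : A.toBlocks₁₂ *ᵥ v = 0) : μ ∈ spectrum ℂ A := by
  refine mem_spectrum_iff_exists_mulVec_eq_smul.mpr ⟨_, zero_sumElim_ne_zero hv0, ?_⟩
  rw [mulVec_zero_sumElim, hA₁₂, hv]
  ext (i | j) <;> simp

variable {d : α ⊕ β → ℂ} {R R' : Matrix (α ⊕ β) (α ⊕ β) ℂ}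

theorem re_nonpos_of_toBlocks₂₂_mulVec_eq_smul (hd : (diagonal d).PosDef) (hR : R.PosSemidef)
    (hQ : Aᴴ * diagonal d + diagonal d * A + R = 0) (hv0 : v ≠ 0)
    (hv : A.toBlocks₂₂ *ᵥ v = μ • v) : μ.re ≤ 0 := by
  refine re_nonpos_of_lyapunov hd hR hQ (x := (0 : α → ℂ) ⊕ᵥ v) ?_ ?_
  · exact zero_sumElim_ne_zero hv0
  · simpa using star_diagonal_mulVec_dotProduct_eq_zero hv d 1

theorem toBlocks_mulVec_diagonal_sq_of_re_eq_zero (hd : (diagonal d).IsHermitian)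
    (hR : R.PosSemidef) (hR' : R'.PosSemidef) (hP : A * diagonal d + diagonal d * Aᴴ + R' = 0)
    (hQ : Aᴴ * diagonal d + diagonal d * A + R = 0) (hv : A.toBlocks₂₂ *ᵥ v = μ • v)
    (hμ : μ.re = 0) :
    A.toBlocks₁₂ *ᵥ (diagonal (fun j => d (Sum.inr j) ^ 2) *ᵥ v) =
        diagonal (fun i => d (Sum.inl i) ^ 2) *ᵥ (A.toBlocks₁₂ *ᵥ v) ∧
      A.toBlocks₂₂ *ᵥ (diagonal (fun j => d (Sum.inr j) ^ 2) *ᵥ v) =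
        μ • diagonal (fun j => d (Sum.inr j) ^ 2) *ᵥ v := by
  set x : α ⊕ β → ℂ := (0 : α → ℂ) ⊕ᵥ v
  set S := diagonal d
  have hx : star (S *ᵥ x) ⬝ᵥ (A *ᵥ x - μ • x) = 0 := by
    simpa using star_diagonal_mulVec_dotProduct_eq_zero hv d 1
  have hQx : Aᴴ *ᵥ (S *ᵥ x) = -(S *ᵥ (A *ᵥ x)) :=
    eq_neg_of_add_eq_zero_left (lyapunov_mulVec_eq_zero hd hR hQ hx hμ)
  have hPx : A *ᵥ (S *ᵥ (S *ᵥ x)) + S *ᵥ (Aᴴ *ᵥ (S *ᵥ x)) = 0 := by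
    have hP' : Aᴴᴴ * S + S * Aᴴ + R' = 0 := by rwa [conjTranspose_conjTranspose]
    have horth : star (S *ᵥ (S *ᵥ x)) ⬝ᵥ (Aᴴ *ᵥ (S *ᵥ x) - (-μ) • (S *ᵥ x)) = 0 := by
      have : Aᴴ *ᵥ (S *ᵥ x) - (-μ) • (S *ᵥ x) = -(S *ᵥ (A *ᵥ x - μ • x)) := by
        rw [hQx, mulVec_sub, mulVec_smul]; module
      rw [this, dotProduct_neg, mulVec_mulVec, diagonal_mul_diagonal,
        star_diagonal_mulVec_dotProduct_eq_zero hv, neg_zero]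
    simpa using lyapunov_mulVec_eq_zero hd hR' hP' horth (by simp [hμ])
  have hSS : ∀ y, S *ᵥ (S *ᵥ y) = diagonal (fun i => d i ^ 2) *ᵥ y := fun y => by
    rw [mulVec_mulVec, diagonal_mul_diagonal]; simp only [sq]
  rw [hQx, mulVec_neg, add_neg_eq_zero, hSS, hSS, diagonal_mulVec_sumElim, mulVec_zero,
    mulVec_zero_sumElim, mulVec_zero_sumElim, hv, diagonal_mulVec_sumElim, Sum.elim_eq_iff] at hPx
  simpa [Function.comp_def, mulVec_smul] using hPx

end Blocks

end Matrix

theorem balanced_toBlocks₂₂_hurwitz_general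
    (d₁ d₂ m l : ℕ)
    (A : Matrix (Fin d₁ ⊕ Fin d₂) (Fin d₁ ⊕ Fin d₂) ℂ)
    (N : Fin m → Matrix (Fin d₁ ⊕ Fin d₂) (Fin d₁ ⊕ Fin d₂) ℂ)
    (B : Matrix (Fin d₁ ⊕ Fin d₂) (Fin m) ℂ)
    (C : Matrix (Fin l) (Fin d₁ ⊕ Fin d₂) ℂ)
    (σ : Fin d₁ ⊕ Fin d₂ → ℝ) (hσ : ∀ i, 0 < σ i)
    (hHurwitz : ∀ μ ∈ spectrum ℂ A, μ.re < 0)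
    (hLyapP : A * Matrix.diagonal (fun i => (σ i : ℂ)) +
        Matrix.diagonal (fun i => (σ i : ℂ)) * Aᴴ +
        (∑ k, N k * Matrix.diagonal (fun i => (σ i : ℂ)) * (N k)ᴴ) + B * Bᴴ = 0)
    (hLyapQ : Aᴴ * Matrix.diagonal (fun i => (σ i : ℂ)) +
        Matrix.diagonal (fun i => (σ i : ℂ)) * A +
        (∑ k, (N k)ᴴ * Matrix.diagonal (fun i => (σ i : ℂ)) * N k) + Cᴴ * C = 0)
    (hdisj : ∀ (i : Fin d₁) (j : Fin d₂), σ (Sum.inl i) ≠ σ (Sum.inr j)) :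
    ∀ μ ∈ spectrum ℂ A.toBlocks₂₂, μ.re < 0 := by
  intro μ hμ
  by_contra! hre
  have hS : (diagonal fun i => (σ i : ℂ)).PosDef := PosDef.diagonal fun i => by exact_mod_cast hσ i
  have hR' := (posSemidef_sum Finset.univ fun k _ =>
    hS.posSemidef.mul_mul_conjTranspose_same (N k)).add (posSemidef_self_mul_conjTranspose B)
  have hR := (posSemidef_sum Finset.univ fun k _ =>
    hS.posSemidef.conjTranspose_mul_mul_same (N k)).add (posSemidef_conjTranspose_mul_self C)
  rw [add_assoc] at hLyapP hLyapQ
  obtain ⟨v₁, hv₁0, hv₁⟩ := mem_spectrum_iff_exists_mulVec_eq_smul.mp hμ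
  have hμre : μ.re = 0 :=
    le_antisymm (re_nonpos_of_toBlocks₂₂_mulVec_eq_smul hS hR hLyapQ hv₁0 hv₁) hre
  have hcomm := fun v (hv : A.toBlocks₂₂ *ᵥ v = μ • v) =>
    toBlocks_mulVec_diagonal_sq_of_re_eq_zero hS.isHermitian hR hR' hLyapP hLyapQ hv hμre
  obtain ⟨v, hv0, hv, c, hc, hDv⟩ := exists_mulVec_eq_smul_of_mapsTo hμ fun v hv => (hcomm v hv).2
  obtain ⟨j, rfl⟩ : c ∈ Set.range _ := by rwa [spectrum_diagonal] at hc
  have hA₁₂ : A.toBlocks₁₂ *ᵥ v = 0 := by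
    refine eq_zero_of_diagonal_mulVec_eq_smul (d := fun i => (σ (Sum.inl i) : ℂ) ^ 2)
      (c := (σ (Sum.inr j) : ℂ) ^ 2) ?_ fun i h => ?_
    · rw [← (hcomm v hv).1, hDv, mulVec_smul]
    · exact hdisj i j ((sq_eq_sq₀ (hσ _).le (hσ _).le).mp (by exact_mod_cast h))
  exact (hHurwitz μ (mem_spectrum_of_toBlocks₁₂_mulVec_eq_zero hv0 hv hA₁₂)).not_ge hre

/-- Stability of the lower-right block of a balanced bilinear system:
if the system `(A, N₁, …, N_m, B, C)` is balanced with Hankel singular value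
matrix `Σ = diagonal σ` (all `σ i > 0`), `A` is Hurwitz, `(A, B)` is
controllable, `(A, C)` is observable, and the two groups of singular values
are disjoint, then the block `A₂₂` is Hurwitz. -/
theorem balanced_toBlocks₂₂_hurwitz
    (d₁ d₂ m l : ℕ) (hd₁ : 1 ≤ d₁) (hd₂ : 1 ≤ d₂)
    (A : Matrix (Fin d₁ ⊕ Fin d₂) (Fin d₁ ⊕ Fin d₂) ℂ)
    (N : Fin m → Matrix (Fin d₁ ⊕ Fin d₂) (Fin d₁ ⊕ Fin d₂) ℂ)
    (B : Matrix (Fin d₁ ⊕ Fin d₂) (Fin m) ℂ)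
    (C : Matrix (Fin l) (Fin d₁ ⊕ Fin d₂) ℂ)
    (σ : Fin d₁ ⊕ Fin d₂ → ℝ) (hσ : ∀ i, 0 < σ i)
    (hHurwitz : ∀ μ ∈ spectrum ℂ A, μ.re < 0)
    (hLyapP : A * Matrix.diagonal (fun i => (σ i : ℂ)) +
        Matrix.diagonal (fun i => (σ i : ℂ)) * Aᴴ +
        (∑ k, N k * Matrix.diagonal (fun i => (σ i : ℂ)) * (N k)ᴴ) + B * Bᴴ = 0)
    (hLyapQ : Aᴴ * Matrix.diagonal (fun i => (σ i : ℂ)) +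
        Matrix.diagonal (fun i => (σ i : ℂ)) * A +
        (∑ k, (N k)ᴴ * Matrix.diagonal (fun i => (σ i : ℂ)) * N k) + Cᴴ * C = 0)
    (hctrb : (Matrix.of fun (i : Fin d₁ ⊕ Fin d₂) (p : Fin (d₁ + d₂) × Fin m) =>
        (A ^ (p.1 : ℕ) * B) i p.2).rank = d₁ + d₂)
    (hobs : (Matrix.of fun (i : Fin d₁ ⊕ Fin d₂) (p : Fin (d₁ + d₂) × Fin l) =>
        (Aᴴ ^ (p.1 : ℕ) * Cᴴ) i p.2).rank = d₁ + d₂)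
    (hdisj : ∀ (i : Fin d₁) (j : Fin d₂), σ (Sum.inl i) ≠ σ (Sum.inr j)) :
    ∀ μ ∈ spectrum ℂ A.toBlocks₂₂, μ.re < 0 :=
  balanced_toBlocks₂₂_hurwitz_general d₁ d₂ m l A N B C σ hσ hHurwitz hLyapP hLyapQ hdisj
end

section
/- Let n = d₁ + d₂ with d₁, d₂ ≥ 1, and let A, N₁, …, N_m ∈ ℂ^{n×n}, B ∈ ℂ^{n×m}, C ∈ ℂ^{l×n}. Suppose: (i) A is Hurwitz; (ii) the diagonal matrix Σ = diag(σ₁, …, σ_n) with all σ_i > 0 satisfies both generalized Lyapunov equations A Σ + Σ A* + Σ_{k=1}^m N_k Σ N_k* + B B* = 0 and A* Σ + Σ A + Σ_{k=1}^m N_k* Σ N_k + C* C = 0; (iii) the pair (A,B) is controllable and the pair (A,C) is observable; (iv) the sets {σ₁, …, σ_{d₁}} and {σ_{d₁+1}, …, σ_n} are disjoint. Then every eigenvalue of the upper-left d₁×d₁ block A₁₁ of A has strictly negative real part, i.e. A₁₁ is Hurwitz. -/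
open Matrix Complex

variable {n' : Type*} [Fintype n'] [DecidableEq n']

/-- spectrum membership via eigenvectors (mulVec form). -/
lemma mem_spectrum_iff_exists_mulVec (M : Matrix n' n' ℂ) (μ : ℂ) :
    μ ∈ spectrum ℂ M ↔ ∃ v, v ≠ 0 ∧ M *ᵥ v = μ • v := by
  rw [← AlgEquiv.spectrum_eq (Matrix.toLinAlgEquiv') M,
    ← Module.End.hasEigenvalue_iff_mem_spectrum]
  constructor
  · intro h
    obtain ⟨v, hv⟩ := h.exists_hasEigenvector
    refine ⟨v, hv.right, ?_⟩
    have := hv.apply_eq_smul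
    simpa [Matrix.toLinAlgEquiv'_apply, Matrix.toLin'_apply] using this
  · rintro ⟨v, hv0, hv⟩
    apply Module.End.hasEigenvalue_of_hasEigenvector (x := v)
    refine ⟨Module.End.mem_eigenspace_iff.mpr ?_, hv0⟩
    simpa [Matrix.toLinAlgEquiv'_apply, Matrix.toLin'_apply] using hv

/-- quadratic form of a positive diagonal matrix. -/
lemma quad_diag (σ : n' → ℝ) (z : n' → ℂ) :
    star z ⬝ᵥ (Matrix.diagonal (fun i => (σ i : ℂ)) *ᵥ z) =
      ((∑ i, σ i * Complex.normSq (z i) : ℝ) : ℂ) := by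
  simp only [dotProduct, mulVec_diagonal, Pi.star_apply, Complex.ofReal_sum]
  refine Finset.sum_congr rfl fun i _ => ?_
  push_cast
  rw [Complex.normSq_eq_conj_mul_self]
  simp [RCLike.star_def]; ring

omit [DecidableEq n'] in
lemma quad_id (z : n' → ℂ) :
    star z ⬝ᵥ z = ((∑ i, Complex.normSq (z i) : ℝ) : ℂ) := by
  simp only [dotProduct, Pi.star_apply, Complex.ofReal_sum]
  refine Finset.sum_congr rfl fun i _ => ?_
  rw [Complex.normSq_eq_conj_mul_self]
  simp [RCLike.star_def]

lemma quad_diag_nonneg (σ : n' → ℝ) (hσ : ∀ i, 0 < σ i) (z : n' → ℂ) :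
    0 ≤ ∑ i, σ i * Complex.normSq (z i) :=
  Finset.sum_nonneg fun i _ => mul_nonneg (hσ i).le (Complex.normSq_nonneg _)

lemma quad_diag_eq_zero (σ : n' → ℝ) (hσ : ∀ i, 0 < σ i) (z : n' → ℂ)
    (h : ∑ i, σ i * Complex.normSq (z i) = 0) : z = 0 := by
  have := (Finset.sum_eq_zero_iff_of_nonneg
    (fun i _ => mul_nonneg (hσ i).le (Complex.normSq_nonneg _))).mp h
  funext i
  have hi := this i (Finset.mem_univ i)
  have : Complex.normSq (z i) = 0 := by
    rcases mul_eq_zero.mp hi with h' | h'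
    · exact absurd h' (ne_of_gt (hσ i))
    · exact h'
  simpa using Complex.normSq_eq_zero.mp this

omit [DecidableEq n'] in
lemma quad_id_eq_zero (z : n' → ℂ) (h : ∑ i, Complex.normSq (z i) = 0) : z = 0 := by
  have := (Finset.sum_eq_zero_iff_of_nonneg
    (fun i _ => Complex.normSq_nonneg (z i))).mp h
  funext i
  simpa using Complex.normSq_eq_zero.mp (this i (Finset.mem_univ i))

lemma sum_mulVec' {κ : Type*} [Fintype κ] (M : κ → Matrix n' n' ℂ) (x : n' → ℂ) :
    (∑ k, M k) *ᵥ x = ∑ k, M k *ᵥ x := by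
  ext i
  simp [mulVec, dotProduct, Matrix.sum_apply, Finset.sum_mul]
  exact Finset.sum_comm

section Key

variable {α β κ L : Type*} [Fintype α] [Fintype β] [DecidableEq α] [DecidableEq β]
  [Fintype κ] [Fintype L]

lemma dot_sum' {ι : Type*} [Fintype ι] (v : n' → ℂ) (w : ι → n' → ℂ) :
    v ⬝ᵥ (∑ k, w k) = ∑ k, v ⬝ᵥ w k := by
  simp only [dotProduct, Finset.sum_apply, Finset.mul_sum]
  exact Finset.sum_comm

lemma key_scalar (σ : α ⊕ β → ℝ)
    (AA : Matrix (α ⊕ β) (α ⊕ β) ℂ) (NN : κ → Matrix (α ⊕ β) (α ⊕ β) ℂ)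
    (CC : Matrix L (α ⊕ β) ℂ)
    (heq : AAᴴ * Matrix.diagonal (fun i => (σ i : ℂ)) +
        Matrix.diagonal (fun i => (σ i : ℂ)) * AA +
        (∑ k, (NN k)ᴴ * Matrix.diagonal (fun i => (σ i : ℂ)) * NN k) + CCᴴ * CC = 0)
    (μ : ℂ) (x : α ⊕ β → ℂ) (h0 : ∀ j, x (Sum.inr j) = 0)
    (heig : ∀ i, (AA *ᵥ x) (Sum.inl i) = μ * x (Sum.inl i)) :
    2 * μ.re * (∑ i, σ i * Complex.normSq (x i)) +
      (∑ k, ∑ i, σ i * Complex.normSq ((NN k *ᵥ x) i)) +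
      (∑ i, Complex.normSq ((CC *ᵥ x) i)) = 0 := by
  have hvec : (AAᴴ * Matrix.diagonal (fun i => (σ i : ℂ))) *ᵥ x +
      (Matrix.diagonal (fun i => (σ i : ℂ)) * AA) *ᵥ x +
      (∑ k, (NN k)ᴴ * Matrix.diagonal (fun i => (σ i : ℂ)) * NN k) *ᵥ x +
      (CCᴴ * CC) *ᵥ x = 0 := by
    rw [← add_mulVec, ← add_mulVec, ← add_mulVec, heq, zero_mulVec]
  have hdot := congrArg (fun v => star x ⬝ᵥ v) hvec
  simp only [dotProduct_add, dotProduct_zero] at hdot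
  have hSc : ∀ i, (starRingEnd ℂ) (x i) * x i = ((Complex.normSq (x i) : ℝ) : ℂ) := by
    intro i; rw [Complex.normSq_eq_conj_mul_self]
  have hT1 : star x ⬝ᵥ ((AAᴴ * Matrix.diagonal (fun i => (σ i : ℂ))) *ᵥ x) =
      (starRingEnd ℂ) μ * ((∑ i, σ i * Complex.normSq (x i) : ℝ) : ℂ) := by
    rw [← mulVec_mulVec, dotProduct_mulVec, ← star_mulVec]
    simp only [dotProduct, Pi.star_apply, mulVec_diagonal, Complex.star_def,
      Complex.ofReal_sum]
    rw [Fintype.sum_sum_type, Fintype.sum_sum_type]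
    simp only [h0, heig, mul_zero, zero_mul, map_zero, Complex.normSq_zero,
      Complex.ofReal_zero, Finset.sum_const_zero, add_zero]
    rw [Finset.mul_sum]
    refine Finset.sum_congr rfl fun i _ => ?_
    rw [_root_.map_mul]
    push_cast
    rw [← hSc]
    ring
  have hT2 : star x ⬝ᵥ ((Matrix.diagonal (fun i => (σ i : ℂ)) * AA) *ᵥ x) =
      μ * ((∑ i, σ i * Complex.normSq (x i) : ℝ) : ℂ) := by
    rw [← mulVec_mulVec]
    simp only [dotProduct, Pi.star_apply, mulVec_diagonal, Complex.star_def,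
      Complex.ofReal_sum]
    rw [Fintype.sum_sum_type, Fintype.sum_sum_type]
    simp only [h0, heig, mul_zero, zero_mul, map_zero, Complex.normSq_zero,
      Complex.ofReal_zero, Finset.sum_const_zero, add_zero]
    rw [Finset.mul_sum]
    refine Finset.sum_congr rfl fun i _ => ?_
    push_cast
    rw [← hSc]
    ring
  have hT3 : star x ⬝ᵥ ((∑ k, (NN k)ᴴ * Matrix.diagonal (fun i => (σ i : ℂ)) * NN k) *ᵥ x) =
      ((∑ k, ∑ i, σ i * Complex.normSq ((NN k *ᵥ x) i) : ℝ) : ℂ) := by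
    rw [sum_mulVec', dot_sum', Complex.ofReal_sum]
    refine Finset.sum_congr rfl fun k _ => ?_
    rw [← mulVec_mulVec, ← mulVec_mulVec, dotProduct_mulVec, ← star_mulVec,
      quad_diag σ (NN k *ᵥ x)]
  have hT4 : star x ⬝ᵥ ((CCᴴ * CC) *ᵥ x) =
      ((∑ i, Complex.normSq ((CC *ᵥ x) i) : ℝ) : ℂ) := by
    rw [← mulVec_mulVec, dotProduct_mulVec, ← star_mulVec, quad_id]
  rw [hT1, hT2, hT3, hT4] at hdot
  have hre := congrArg Complex.re hdot
  simp only [Complex.add_re, Complex.mul_re, Complex.ofReal_re, Complex.ofReal_im,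
    Complex.conj_re, Complex.conj_im, Complex.zero_re, mul_zero, sub_zero, zero_mul,
    neg_zero, neg_mul, zero_sub, sub_neg_eq_add] at hre
  linarith [hre]

lemma key_le (σ : α ⊕ β → ℝ) (hσ : ∀ i, 0 < σ i)
    (AA : Matrix (α ⊕ β) (α ⊕ β) ℂ) (NN : κ → Matrix (α ⊕ β) (α ⊕ β) ℂ)
    (CC : Matrix L (α ⊕ β) ℂ)
    (heq : AAᴴ * Matrix.diagonal (fun i => (σ i : ℂ)) +
        Matrix.diagonal (fun i => (σ i : ℂ)) * AA +
        (∑ k, (NN k)ᴴ * Matrix.diagonal (fun i => (σ i : ℂ)) * NN k) + CCᴴ * CC = 0)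
    (μ : ℂ) (x : α ⊕ β → ℂ) (h0 : ∀ j, x (Sum.inr j) = 0)
    (heig : ∀ i, (AA *ᵥ x) (Sum.inl i) = μ * x (Sum.inl i)) (hx : x ≠ 0) :
    μ.re ≤ 0 := by
  have hsc := key_scalar σ AA NN CC heq μ x h0 heig
  have hSpos : 0 < ∑ i, σ i * Complex.normSq (x i) := by
    obtain ⟨i, hi⟩ := Function.ne_iff.mp hx
    refine Finset.sum_pos' (fun j _ => mul_nonneg (hσ j).le (Complex.normSq_nonneg _)) ⟨i,
      Finset.mem_univ i, mul_pos (hσ i) ?_⟩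
    simpa [Complex.normSq_pos] using hi
  have hQ : 0 ≤ ∑ k, ∑ i, σ i * Complex.normSq ((NN k *ᵥ x) i) :=
    Finset.sum_nonneg fun k _ => quad_diag_nonneg σ hσ _
  have hR : 0 ≤ ∑ i, Complex.normSq ((CC *ᵥ x) i) :=
    Finset.sum_nonneg fun i _ => Complex.normSq_nonneg _
  nlinarith [hsc, hSpos, hQ, hR]

lemma key_zero (σ : α ⊕ β → ℝ) (hσ : ∀ i, 0 < σ i)
    (AA : Matrix (α ⊕ β) (α ⊕ β) ℂ) (NN : κ → Matrix (α ⊕ β) (α ⊕ β) ℂ)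
    (CC : Matrix L (α ⊕ β) ℂ)
    (heq : AAᴴ * Matrix.diagonal (fun i => (σ i : ℂ)) +
        Matrix.diagonal (fun i => (σ i : ℂ)) * AA +
        (∑ k, (NN k)ᴴ * Matrix.diagonal (fun i => (σ i : ℂ)) * NN k) + CCᴴ * CC = 0)
    (μ : ℂ) (hre : μ.re = 0) (x : α ⊕ β → ℂ) (h0 : ∀ j, x (Sum.inr j) = 0)
    (heig : ∀ i, (AA *ᵥ x) (Sum.inl i) = μ * x (Sum.inl i)) :
    (∀ k, NN k *ᵥ x = 0) ∧ CC *ᵥ x = 0 ∧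
      AAᴴ *ᵥ (Matrix.diagonal (fun i => (σ i : ℂ)) *ᵥ x) =
        -(Matrix.diagonal (fun i => (σ i : ℂ)) *ᵥ (AA *ᵥ x)) := by
  have hsc := key_scalar σ AA NN CC heq μ x h0 heig
  rw [hre] at hsc
  have hQ : 0 ≤ ∑ k, ∑ i, σ i * Complex.normSq ((NN k *ᵥ x) i) :=
    Finset.sum_nonneg fun k _ => quad_diag_nonneg σ hσ _
  have hR : 0 ≤ ∑ i, Complex.normSq ((CC *ᵥ x) i) :=
    Finset.sum_nonneg fun i _ => Complex.normSq_nonneg _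
  have hQ0 : ∑ k, ∑ i, σ i * Complex.normSq ((NN k *ᵥ x) i) = 0 := by linarith
  have hR0 : ∑ i, Complex.normSq ((CC *ᵥ x) i) = 0 := by linarith
  have hN : ∀ k, NN k *ᵥ x = 0 := by
    intro k
    refine quad_diag_eq_zero σ hσ _ ?_
    have := (Finset.sum_eq_zero_iff_of_nonneg
      (fun k _ => quad_diag_nonneg σ hσ (NN k *ᵥ x))).mp hQ0
    exact this k (Finset.mem_univ k)
  have hC : CC *ᵥ x = 0 := quad_id_eq_zero _ hR0
  refine ⟨hN, hC, ?_⟩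
  have hvec : (AAᴴ * Matrix.diagonal (fun i => (σ i : ℂ))) *ᵥ x +
      (Matrix.diagonal (fun i => (σ i : ℂ)) * AA) *ᵥ x +
      (∑ k, (NN k)ᴴ * Matrix.diagonal (fun i => (σ i : ℂ)) * NN k) *ᵥ x +
      (CCᴴ * CC) *ᵥ x = 0 := by
    rw [← add_mulVec, ← add_mulVec, ← add_mulVec, heq, zero_mulVec]
  rw [sum_mulVec'] at hvec
  have h3 : ∀ k, ((NN k)ᴴ * Matrix.diagonal (fun i => (σ i : ℂ)) * NN k) *ᵥ x = 0 := by
    intro k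
    rw [← mulVec_mulVec, ← mulVec_mulVec, hN k, mulVec_zero, mulVec_zero]
  have h4 : (CCᴴ * CC) *ᵥ x = 0 := by rw [← mulVec_mulVec, hC, mulVec_zero]
  simp only [h3, h4, Finset.sum_const_zero, add_zero] at hvec
  rw [← mulVec_mulVec, ← mulVec_mulVec] at hvec
  linear_combination (norm := module) hvec

end Key

/-- Stability of the upper-left block of a balanced bilinear system:
if the system `(A, N₁, …, N_m, B, C)` is balanced with Hankel singular value
matrix `Σ = diagonal σ` (all `σ i > 0`), `A` is Hurwitz, `(A, B)` is
controllable, `(A, C)` is observable, and the two groups of singular values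
are disjoint, then the block `A₁₁` is Hurwitz. -/
theorem balanced_toBlocks₁₁_hurwitz
    (d₁ d₂ m l : ℕ) (hd₁ : 1 ≤ d₁) (hd₂ : 1 ≤ d₂)
    (A : Matrix (Fin d₁ ⊕ Fin d₂) (Fin d₁ ⊕ Fin d₂) ℂ)
    (N : Fin m → Matrix (Fin d₁ ⊕ Fin d₂) (Fin d₁ ⊕ Fin d₂) ℂ)
    (B : Matrix (Fin d₁ ⊕ Fin d₂) (Fin m) ℂ)
    (C : Matrix (Fin l) (Fin d₁ ⊕ Fin d₂) ℂ)
    (σ : Fin d₁ ⊕ Fin d₂ → ℝ) (hσ : ∀ i, 0 < σ i)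
    (hHurwitz : ∀ μ ∈ spectrum ℂ A, μ.re < 0)
    (hLyapP : A * Matrix.diagonal (fun i => (σ i : ℂ)) +
        Matrix.diagonal (fun i => (σ i : ℂ)) * Aᴴ +
        (∑ k, N k * Matrix.diagonal (fun i => (σ i : ℂ)) * (N k)ᴴ) + B * Bᴴ = 0)
    (hLyapQ : Aᴴ * Matrix.diagonal (fun i => (σ i : ℂ)) +
        Matrix.diagonal (fun i => (σ i : ℂ)) * A +
        (∑ k, (N k)ᴴ * Matrix.diagonal (fun i => (σ i : ℂ)) * N k) + Cᴴ * C = 0)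
    (hctrb : (Matrix.of fun (i : Fin d₁ ⊕ Fin d₂) (p : Fin (d₁ + d₂) × Fin m) =>
        (A ^ (p.1 : ℕ) * B) i p.2).rank = d₁ + d₂)
    (hobs : (Matrix.of fun (i : Fin d₁ ⊕ Fin d₂) (p : Fin (d₁ + d₂) × Fin l) =>
        (Aᴴ ^ (p.1 : ℕ) * Cᴴ) i p.2).rank = d₁ + d₂)
    (hdisj : ∀ (i : Fin d₁) (j : Fin d₂), σ (Sum.inl i) ≠ σ (Sum.inr j)) :
    ∀ μ ∈ spectrum ℂ A.toBlocks₁₁, μ.re < 0 := by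
  intro μ hμ
  by_contra hcon
  push_neg at hcon
  -- eigenvector of the (1,1) block, extended by zero
  obtain ⟨w, hw0, hw⟩ := (mem_spectrum_iff_exists_mulVec _ μ).mp hμ
  set x₀ : Fin d₁ ⊕ Fin d₂ → ℂ := Sum.elim w 0 with hx₀def
  have hx₀0 : ∀ j, x₀ (Sum.inr j) = 0 := fun j => rfl
  have hx₀eig : ∀ i, (A *ᵥ x₀) (Sum.inl i) = μ * x₀ (Sum.inl i) := by
    intro i
    have h1 : (A *ᵥ x₀) (Sum.inl i) = (A.toBlocks₁₁ *ᵥ w) i := by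
      simp [mulVec, dotProduct, Fintype.sum_sum_type, Matrix.toBlocks₁₁, hx₀def]
    rw [h1, hw]
    simp [hx₀def]
  have hx₀ne : x₀ ≠ 0 := by
    intro h
    exact hw0 (funext fun i => congrFun h (Sum.inl i))
  -- the real part is ≤ 0, hence = 0
  have hle := key_le σ hσ A N C hLyapQ μ x₀ hx₀0 hx₀eig hx₀ne
  have hre : μ.re = 0 := le_antisymm hle hcon
  -- rearranged first Lyapunov equation
  have hLyapP' : (Aᴴ)ᴴ * Matrix.diagonal (fun i => (σ i : ℂ)) +
      Matrix.diagonal (fun i => (σ i : ℂ)) * Aᴴ +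
      (∑ k, ((N k)ᴴ)ᴴ * Matrix.diagonal (fun i => (σ i : ℂ)) * (N k)ᴴ) + (Bᴴ)ᴴ * Bᴴ = 0 := by
    simp only [conjTranspose_conjTranspose]
    exact hLyapP
  -- the central commutation identity on the invariant cone
  have hmain : ∀ x : Fin d₁ ⊕ Fin d₂ → ℂ, (∀ j, x (Sum.inr j) = 0) →
      (∀ i, (A *ᵥ x) (Sum.inl i) = μ * x (Sum.inl i)) →
      A *ᵥ (Matrix.diagonal (fun i => (σ i : ℂ)) *ᵥ (Matrix.diagonal (fun i => (σ i : ℂ)) *ᵥ x)) =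
        Matrix.diagonal (fun i => (σ i : ℂ)) *ᵥ (Matrix.diagonal (fun i => (σ i : ℂ)) *ᵥ (A *ᵥ x)) := by
    intro x h0x heigx
    obtain ⟨hN, hC, hpush⟩ := key_zero σ hσ A N C hLyapQ μ hre x h0x heigx
    have hconj : (starRingEnd ℂ) μ = -μ := by
      apply Complex.ext <;> simp [hre]
    have hu0 : ∀ j, (Matrix.diagonal (fun i => (σ i : ℂ)) *ᵥ x) (Sum.inr j) = 0 := by
      intro j; simp [mulVec_diagonal, h0x j]
    have hueig : ∀ i, (Aᴴ *ᵥ (Matrix.diagonal (fun i => (σ i : ℂ)) *ᵥ x)) (Sum.inl i) =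
        (starRingEnd ℂ) μ * (Matrix.diagonal (fun i => (σ i : ℂ)) *ᵥ x) (Sum.inl i) := by
      intro i
      rw [hpush, hconj]
      simp only [Pi.neg_apply, mulVec_diagonal, heigx i]
      ring
    obtain ⟨-, -, hpush2⟩ := key_zero σ hσ Aᴴ (fun k => (N k)ᴴ) Bᴴ hLyapP'
      ((starRingEnd ℂ) μ) (by simp [hre]) _ hu0 hueig
    rw [conjTranspose_conjTranspose, hpush] at hpush2
    simpa [Matrix.mulVec_neg] using hpush2
  -- the submodule of extended eigenvectors
  let K : Submodule ℂ ((Fin d₁ ⊕ Fin d₂) → ℂ) :=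
  { carrier := {x | (∀ j, x (Sum.inr j) = 0) ∧ ∀ i, (A *ᵥ x) (Sum.inl i) = μ * x (Sum.inl i)}
    add_mem' := by
      rintro a b ⟨ha1, ha2⟩ ⟨hb1, hb2⟩
      refine ⟨fun j => by simp [ha1 j, hb1 j], fun i => by
        simp only [mulVec_add, Pi.add_apply, ha2 i, hb2 i]; ring⟩
    zero_mem' := ⟨fun j => rfl, fun i => by simp⟩
    smul_mem' := by
      rintro c a ⟨ha1, ha2⟩
      refine ⟨fun j => by simp [ha1 j], fun i => by
        simp only [mulVec_smul, Pi.smul_apply, ha2 i, smul_eq_mul]; ring⟩ }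
  have hx₀mem : x₀ ∈ K := ⟨hx₀0, hx₀eig⟩
  -- K is invariant under D²
  have hinv : ∀ x ∈ K, (Matrix.diagonal (fun i => (σ i : ℂ)) *
      Matrix.diagonal (fun i => (σ i : ℂ))).mulVecLin x ∈ K := by
    intro x hx
    obtain ⟨h0x, heigx⟩ := hx
    have hm := hmain x h0x heigx
    constructor
    · intro j
      simp [Matrix.mulVecLin_apply, ← mulVec_mulVec, mulVec_diagonal, h0x j]
    · intro i
      have e1 : (Matrix.diagonal (fun i => (σ i : ℂ)) *
          Matrix.diagonal (fun i => (σ i : ℂ))).mulVecLin x =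
          Matrix.diagonal (fun i => (σ i : ℂ)) *ᵥ (Matrix.diagonal (fun i => (σ i : ℂ)) *ᵥ x) := by
        rw [Matrix.mulVecLin_apply, ← mulVec_mulVec]
      rw [e1, hm]
      simp only [mulVec_diagonal, heigx i]
      ring
  haveI : Nontrivial K := nontrivial_of_ne ⟨x₀, hx₀mem⟩ 0 (by
    simp only [ne_eq, Submodule.mk_eq_zero]
    exact hx₀ne)
  let f : K →ₗ[ℂ] K := LinearMap.restrict
    (Matrix.diagonal (fun i => (σ i : ℂ)) * Matrix.diagonal (fun i => (σ i : ℂ))).mulVecLin hinv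
  obtain ⟨t, ht⟩ := Module.End.exists_eigenvalue f
  obtain ⟨v, hv⟩ := ht.exists_hasEigenvector
  have hfv := hv.apply_eq_smul
  have hxv : (Matrix.diagonal (fun i => (σ i : ℂ)) *
      Matrix.diagonal (fun i => (σ i : ℂ))) *ᵥ (v : (Fin d₁ ⊕ Fin d₂) → ℂ) =
      t • (v : (Fin d₁ ⊕ Fin d₂) → ℂ) := by
    have := congrArg (Subtype.val) hfv
    simpa [f, LinearMap.restrict_apply, Matrix.mulVecLin_apply] using this
  obtain ⟨h0v, heigv⟩ := v.2
  have hvne : (v : (Fin d₁ ⊕ Fin d₂) → ℂ) ≠ 0 := by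
    intro h
    exact hv.right (Subtype.coe_injective h)
  obtain ⟨i₀, hi₀⟩ := Function.ne_iff.mp hvne
  obtain ⟨j₀, rfl⟩ : ∃ j₀, i₀ = Sum.inl j₀ := by
    cases i₀ with
    | inl j => exact ⟨j, rfl⟩
    | inr j => exact absurd (h0v j) (by simpa using hi₀)
  have hi₀' : (v : (Fin d₁ ⊕ Fin d₂) → ℂ) (Sum.inl j₀) ≠ 0 := by simpa using hi₀
  have ht_eq : t = (σ (Sum.inl j₀) : ℂ) * (σ (Sum.inl j₀) : ℂ) := by
    have h1 := congrFun hxv (Sum.inl j₀)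
    rw [← mulVec_mulVec] at h1
    simp only [mulVec_diagonal, Pi.smul_apply, smul_eq_mul, ← mul_assoc] at h1
    exact (mul_right_cancel₀ hi₀' h1).symm
  have hm := hmain _ h0v heigv
  have hDDv : Matrix.diagonal (fun i => (σ i : ℂ)) *ᵥ
      (Matrix.diagonal (fun i => (σ i : ℂ)) *ᵥ (v : (Fin d₁ ⊕ Fin d₂) → ℂ)) =
      t • (v : (Fin d₁ ⊕ Fin d₂) → ℂ) := by
    rw [mulVec_mulVec]; exact hxv
  rw [hDDv, mulVec_smul] at hm
  -- the inr components of A *ᵥ v vanish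
  have hAr : ∀ j, (A *ᵥ (v : (Fin d₁ ⊕ Fin d₂) → ℂ)) (Sum.inr j) = 0 := by
    intro j
    by_contra hne
    have h1 := congrFun hm (Sum.inr j)
    simp only [Pi.smul_apply, smul_eq_mul, mulVec_diagonal] at h1
    rw [ht_eq, ← mul_assoc] at h1
    have h2 := mul_right_cancel₀ hne h1
    have h3 : σ (Sum.inl j₀) * σ (Sum.inl j₀) = σ (Sum.inr j) * σ (Sum.inr j) := by
      exact_mod_cast h2
    rcases mul_self_eq_mul_self_iff.mp h3 with h4 | h4
    · exact hdisj j₀ j h4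
    · linarith [hσ (Sum.inl j₀), hσ (Sum.inr j)]
  have hfull : A *ᵥ (v : (Fin d₁ ⊕ Fin d₂) → ℂ) = μ • (v : (Fin d₁ ⊕ Fin d₂) → ℂ) := by
    funext i
    cases i with
    | inl i => simpa using heigv i
    | inr j => simp [hAr j, h0v j]
  have hspec : μ ∈ spectrum ℂ A :=
    (mem_spectrum_iff_exists_mulVec A μ).mpr ⟨_, hvne, hfull⟩
  linarith [hHurwitz μ hspec]
end

section
/- Let n = d₁ + d₂ with d₁, d₂ ≥ 1, and let A, N₁, …, N_m ∈ ℂ^{n×n}, B ∈ ℂ^{n×m}, C ∈ ℂ^{l×n}. Suppose: (i) A is Hurwitz; (ii) the diagonal matrix Σ = diag(σ₁, …, σ_n) with all σ_i > 0 satisfies both generalized Lyapunov equations A Σ + Σ A* + Σ_{k=1}^m N_k Σ N_k* + B B* = 0 and A* Σ + Σ A + Σ_{k=1}^m N_k* Σ N_k + C* C = 0; (iii) the pair (A,B) is controllable and the pair (A,C) is observable; (iv) the sets {σ₁, …, σ_{d₁}} and {σ_{d₁+1}, …, σ_n} are disjoint. Write A in blocks A = [[A₁₁, A₁₂],[A₂₁,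 A₂₂]] with A₁₁ ∈ ℂ^{d₁×d₁} and A₂₂ ∈ ℂ^{d₂×d₂}. Then A₂₂ is invertible and every eigenvalue of the Schur complement A₁₁ − A₁₂ A₂₂⁻¹ A₂₁ has strictly negative real part. -/
/-!
Write `Σ = diagonal σ`. The two Lyapunov equations say that `-(AΣ + ΣAᴴ)` and `-(AᴴΣ + ΣA)` are
positive semidefinite. Hence `Re ⟪x, ΣAx⟫ ≤ 0` for every `x`, and when equality holds the
semidefinite form vanishes on `x`, which gives `AᴴΣx = -ΣAx`. Using this once for each equation
(on `x`, then on `Σx`) shows `AΣ²x = Σ²Ax` whenever `⟪x, ΣAx⟫` and `⟪x, Σ³Ax⟫` are imaginary.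

If `A₂₂` were singular, the vectors `x = (0, w)` with `Ax` supported on the first block would form
a nonzero `Σ²`-invariant subspace. A `Σ²`-eigenvector `x` in it has eigenvalue `σⱼ²` for some `j`
of the second block, and `Ax`, which lies in the first block and in the same `Σ²`-eigenspace, must
vanish because the two groups of singular values are disjoint: `0` would be an eigenvalue of `A`.
Likewise, if `μ` is an eigenvalue of the Schur complement with `Re μ ≥ 0`, the vectors with
`Ax = μ (x₁, 0)` form a nonzero subspace. Testing `Re ⟪x, ΣAx⟫ ≤ 0` on it forces `Re μ = 0`, so it
is `Σ²`-invariant, and the disjointness turns a `Σ²`-eigenvector in it into an eigenvector of `A`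
for `μ`, contradicting stability.
-/

open Matrix
open scoped ComplexOrder

section Dissipative

variable {n : Type*} [Fintype n]

theorem Matrix.star_dotProduct_conjTranspose_mulVec (M : Matrix n n ℂ) (x : n → ℂ) :
    star x ⬝ᵥ Mᴴ *ᵥ x = star (star x ⬝ᵥ M *ᵥ x) := by
  rw [dotProduct_mulVec, vecMul_conjTranspose, star_dotProduct, star_star]

theorem Matrix.IsHermitian.star_mulVec_dotProduct {D : Matrix n n ℂ} (hD : D.IsHermitian)
    (x v : n → ℂ) : star (D *ᵥ x) ⬝ᵥ v = star x ⬝ᵥ D *ᵥ v := by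
  rw [star_mulVec, ← dotProduct_mulVec, hD.eq]

theorem Matrix.re_star_dotProduct_mulVec_nonpos {M : Matrix n n ℂ}
    (hM : (-(Mᴴ + M)).PosSemidef) (x : n → ℂ) : (star x ⬝ᵥ M *ᵥ x).re ≤ 0 := by
  have := hM.re_dotProduct_nonneg x
  simp only [neg_mulVec, add_mulVec, dotProduct_neg, dotProduct_add,
    star_dotProduct_conjTranspose_mulVec, RCLike.re_to_complex, Complex.neg_re, Complex.add_re,
    Complex.star_def, Complex.conj_re] at this
  linarith

theorem Matrix.conjTranspose_mulVec_eq_neg_of_re_nonneg {M : Matrix n n ℂ}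
    (hM : (-(Mᴴ + M)).PosSemidef) {x : n → ℂ} (hx : 0 ≤ (star x ⬝ᵥ M *ᵥ x).re) :
    Mᴴ *ᵥ x = -(M *ᵥ x) := by
  have hre : (star x ⬝ᵥ M *ᵥ x).re = 0 := le_antisymm (re_star_dotProduct_mulVec_nonpos hM x) hx
  have hzero : star x ⬝ᵥ (-(Mᴴ + M)) *ᵥ x = 0 := by
    apply Complex.ext
    · simp [neg_mulVec, add_mulVec, star_dotProduct_conjTranspose_mulVec, hre]
    · exact (Complex.nonneg_iff.mp (hM.dotProduct_mulVec_nonneg x)).2.symm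
  rw [eq_neg_iff_add_eq_zero, ← add_mulVec, ← neg_eq_zero, ← neg_mulVec]
  exact (hM.dotProduct_mulVec_zero_iff x).mp hzero

theorem Matrix.posSemidef_neg_of_lyapunov_eq {m ι : Type*} [Fintype m] [Fintype ι]
    {A D : Matrix n n ℂ} (N : ι → Matrix n n ℂ) (B : Matrix n m ℂ) (hD : D.PosSemidef)
    (h : A * D + D * Aᴴ + ∑ k, N k * D * (N k)ᴴ + B * Bᴴ = 0) :
    (-(A * D + D * Aᴴ)).PosSemidef := by
  rw [add_assoc] at h
  rw [neg_eq_of_add_eq_zero_right h]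
  exact (posSemidef_sum _ fun k _ => hD.mul_mul_conjTranspose_same (N k)).add
    (posSemidef_self_mul_conjTranspose B)

theorem Matrix.mulVec_mulVec_self_comm_of_posSemidef_neg {A D : Matrix n n ℂ}
    (hD : D.IsHermitian) (hP : (-(A * D + D * Aᴴ)).PosSemidef)
    (hQ : (-(Aᴴ * D + D * A)).PosSemidef) {x : n → ℂ}
    (h₁ : 0 ≤ (star x ⬝ᵥ D *ᵥ A *ᵥ x).re) (h₃ : (star x ⬝ᵥ D *ᵥ D *ᵥ D *ᵥ A *ᵥ x).re ≤ 0) :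
    A *ᵥ D *ᵥ D *ᵥ x = D *ᵥ D *ᵥ A *ᵥ x := by
  have hx : Aᴴ *ᵥ D *ᵥ x = -(D *ᵥ A *ᵥ x) := by
    have h := conjTranspose_mulVec_eq_neg_of_re_nonneg (M := D * A)
      (by rwa [conjTranspose_mul, hD.eq]) (x := x) (by rwa [← mulVec_mulVec])
    rwa [conjTranspose_mul, hD.eq, ← mulVec_mulVec, ← mulVec_mulVec] at h
  have hDx : A *ᵥ D *ᵥ (D *ᵥ x) = -(D *ᵥ Aᴴ *ᵥ (D *ᵥ x)) := by
    have h := conjTranspose_mulVec_eq_neg_of_re_nonneg (M := D * Aᴴ)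
      (by rwa [conjTranspose_mul, conjTranspose_conjTranspose, hD.eq]) (x := D *ᵥ x) (by
        rw [← mulVec_mulVec, hD.star_mulVec_dotProduct, hx, mulVec_neg, mulVec_neg,
          dotProduct_neg, Complex.neg_re]
        linarith)
    rwa [conjTranspose_mul, conjTranspose_conjTranspose, hD.eq, ← mulVec_mulVec,
      ← mulVec_mulVec] at h
  rw [hDx, hx, mulVec_neg, neg_neg]

end Dissipative

theorem Module.End.exists_hasEigenvector_mem_of_mapsTo {K V : Type*} [Field K] [IsAlgClosed K]
    [AddCommGroup V] [Module K V] [FiniteDimensional K V] {f : Module.End K V}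
    {E : Submodule K V} (hE : E ≠ ⊥) (hfE : Set.MapsTo f E E) :
    ∃ c, ∃ x ∈ E, f.HasEigenvector c x := by
  have : Nontrivial E := Submodule.nontrivial_iff_ne_bot.mpr hE
  obtain ⟨c, hc⟩ := Module.End.exists_eigenvalue (f.restrict hfE)
  obtain ⟨x, hx⟩ := hc.exists_hasEigenvector
  refine ⟨c, x, x.2, Module.End.mem_eigenspace_iff.mpr ?_, fun h => hx.2 (Subtype.ext h)⟩
  exact congrArg Subtype.val hx.apply_eq_smul

theorem Matrix.isHermitian_diagonal_ofReal {n : Type*} [DecidableEq n] (σ : n → ℝ) :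
    (diagonal fun i => (σ i : ℂ)).IsHermitian :=
  isHermitian_diagonal_of_self_adjoint _ (by ext; simp)

section Eigen

variable {n : Type*} [Fintype n] [DecidableEq n]

theorem Matrix.mem_spectrum_of_mulVec_eq_smul {K : Type*} [CommRing K] {M : Matrix n n K}
    {x : n → K} {μ : K} (hx : x ≠ 0) (h : M *ᵥ x = μ • x) : μ ∈ spectrum K M := by
  rw [← spectrum_toLin']
  exact (Module.End.hasEigenvalue_of_hasEigenvector (x := x)
    ⟨by simpa [Module.End.mem_eigenspace_iff] using h, hx⟩).mem_spectrum

theorem Matrix.exists_mulVec_eq_smul_of_mem_spectrum {K : Type*} [Field K] {M : Matrix n n K}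
    {μ : K} (h : μ ∈ spectrum K M) : ∃ x ≠ 0, M *ᵥ x = μ • x := by
  rw [← spectrum_toLin', ← Module.End.hasEigenvalue_iff_mem_spectrum] at h
  obtain ⟨x, hx⟩ := h.exists_hasEigenvector
  exact ⟨x, hx.2, by simpa using hx.apply_eq_smul⟩

theorem Matrix.mulVec_eq_smul_of_commute_diagonal_sq {A : Matrix n n ℂ} {σ : n → ℝ}
    (hσ : ∀ i, 0 < σ i) {x : n → ℂ} {i₀ : n} {c μ : ℂ} (hx₀ : x i₀ ≠ 0)
    (hx : diagonal (fun i => (σ i : ℂ)) *ᵥ diagonal (fun i => (σ i : ℂ)) *ᵥ x = c • x)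
    (hcomm : A *ᵥ diagonal (fun i => (σ i : ℂ)) *ᵥ diagonal (fun i => (σ i : ℂ)) *ᵥ x =
      diagonal (fun i => (σ i : ℂ)) *ᵥ diagonal (fun i => (σ i : ℂ)) *ᵥ A *ᵥ x)
    (hsupp : ∀ j, σ j = σ i₀ → (A *ᵥ x) j = μ * x j) : A *ᵥ x = μ • x := by
  have hxj : ∀ j, (σ j : ℂ) * σ j * x j = c * x j := fun j => by
    simpa [mulVec_diagonal, mul_assoc] using congrFun hx j
  -- `Ax` lies in the same `Σ²`-eigenspace as `x`, so both vanish wherever `σ j ^ 2 ≠ c`.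
  have hAxj : ∀ j, (σ j : ℂ) * σ j * (A *ᵥ x) j = c * (A *ᵥ x) j := fun j => by
    have := congrFun hcomm j
    rw [hx, mulVec_smul] at this
    simpa only [mulVec_diagonal, Pi.smul_apply, smul_eq_mul, mul_assoc] using this.symm
  have hc : c = σ i₀ * σ i₀ := (mul_right_cancel₀ hx₀ (hxj i₀)).symm
  ext j
  by_cases hj : σ j = σ i₀
  · simpa using hsupp j hj
  · have hne : (σ j : ℂ) * σ j ≠ c := by
      rw [hc]
      exact_mod_cast fun h => hj (by nlinarith [hσ j, hσ i₀])
    have h1 : x j = 0 := (mul_eq_mul_right_iff.mp (hxj j)).resolve_left hne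
    have h2 : (A *ᵥ x) j = 0 := (mul_eq_mul_right_iff.mp (hAxj j)).resolve_left hne
    simp [h1, h2]

theorem Matrix.mem_spectrum_of_commute_diagonal_sq {A : Matrix n n ℂ} {σ : n → ℝ}
    (hσ : ∀ i, 0 < σ i) {μ : ℂ} {E : Submodule ℂ (n → ℂ)} (hE : E ≠ ⊥)
    (hmaps : ∀ x ∈ E, diagonal (fun i => (σ i : ℂ)) *ᵥ diagonal (fun i => (σ i : ℂ)) *ᵥ x ∈ E)
    (hcomm : ∀ x ∈ E, A *ᵥ diagonal (fun i => (σ i : ℂ)) *ᵥ diagonal (fun i => (σ i : ℂ)) *ᵥ x =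
      diagonal (fun i => (σ i : ℂ)) *ᵥ diagonal (fun i => (σ i : ℂ)) *ᵥ A *ᵥ x)
    (hsupp : ∀ x ∈ E, x ≠ 0 → ∃ i, x i ≠ 0 ∧ ∀ j, σ j = σ i → (A *ᵥ x) j = μ * x j) :
    μ ∈ spectrum ℂ A := by
  set D := diagonal (fun i => (σ i : ℂ))
  obtain ⟨c, x, hxE, hx⟩ := Module.End.exists_hasEigenvector_mem_of_mapsTo
    (f := toLin' (D * D)) hE fun x hx => by simpa [toLin'_apply] using hmaps x hx
  obtain ⟨i, hi, hsupp_i⟩ := hsupp x hxE hx.2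
  refine mem_spectrum_of_mulVec_eq_smul hx.2
    (mulVec_eq_smul_of_commute_diagonal_sq (c := c) hσ hi ?_ (hcomm x hxE) hsupp_i)
  rw [mulVec_mulVec]
  exact hx.apply_eq_smul

end Eigen

section Blocks

variable {n₁ n₂ : Type*} [Fintype n₁] [Fintype n₂]

theorem Matrix.mulVec_eq_sumElim_toBlocks {K : Type*} [NonUnitalNonAssocSemiring K]
    (A : Matrix (n₁ ⊕ n₂) (n₁ ⊕ n₂) K) (x : n₁ ⊕ n₂ → K) :
    A *ᵥ x = Sum.elim (A.toBlocks₁₁ *ᵥ (x ∘ Sum.inl) + A.toBlocks₁₂ *ᵥ (x ∘ Sum.inr))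
      (A.toBlocks₂₁ *ᵥ (x ∘ Sum.inl) + A.toBlocks₂₂ *ᵥ (x ∘ Sum.inr)) := by
  conv_lhs => rw [← fromBlocks_toBlocks A]
  exact fromBlocks_mulVec ..

theorem Matrix.mulVec_sumElim_schurComplement [DecidableEq n₂] {K : Type*} [Field K]
    {A : Matrix (n₁ ⊕ n₂) (n₁ ⊕ n₂) K} (h : IsUnit A.toBlocks₂₂) (p : n₁ → K) :
    A *ᵥ Sum.elim p (-(A.toBlocks₂₂⁻¹ *ᵥ A.toBlocks₂₁ *ᵥ p)) =
      Sum.elim ((A.toBlocks₁₁ - A.toBlocks₁₂ * A.toBlocks₂₂⁻¹ * A.toBlocks₂₁) *ᵥ p) 0 := by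
  have h' : IsUnit A.toBlocks₂₂.det := (isUnit_iff_isUnit_det _).mp h
  rw [mulVec_eq_sumElim_toBlocks]
  congr 1
  · rw [Sum.elim_comp_inl, Sum.elim_comp_inr, mulVec_neg, sub_mulVec, ← mulVec_mulVec,
      ← mulVec_mulVec, sub_eq_add_neg]
  · rw [Sum.elim_comp_inl, Sum.elim_comp_inr, mulVec_neg, mulVec_mulVec _ A.toBlocks₂₂,
      mul_nonsing_inv _ h', one_mulVec, add_neg_cancel]

variable [DecidableEq n₁] [DecidableEq n₂]

theorem Matrix.re_star_dotProduct_diagonal_mulVec_of_eq_smul_inl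
    {x v : n₁ ⊕ n₂ → ℂ} {μ : ℂ} (h₁ : ∀ i, v (Sum.inl i) = μ * x (Sum.inl i))
    (h₂ : ∀ j, v (Sum.inr j) = 0) (w : n₁ ⊕ n₂ → ℝ) :
    (star x ⬝ᵥ diagonal (fun i => (w i : ℂ)) *ᵥ v).re =
      μ.re * ∑ i, w (Sum.inl i) * Complex.normSq (x (Sum.inl i)) := by
  have : star x ⬝ᵥ diagonal (fun i => (w i : ℂ)) *ᵥ v =
      μ * ((∑ i, w (Sum.inl i) * Complex.normSq (x (Sum.inl i)) : ℝ) : ℂ) := by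
    simp only [dotProduct, Fintype.sum_sum_type, mulVec_diagonal, h₁, h₂, mul_zero,
      Finset.sum_const_zero, add_zero, Complex.ofReal_sum, Finset.mul_sum]
    refine Finset.sum_congr rfl fun i _ => ?_
    rw [Complex.ofReal_mul, Complex.normSq_eq_conj_mul_self]
    simp only [Pi.star_apply, RCLike.star_def]
    ring
  rw [this, Complex.re_mul_ofReal]

theorem Matrix.mulVec_diagonal_sq_comm_of_inl_eq_zero {A : Matrix (n₁ ⊕ n₂) (n₁ ⊕ n₂) ℂ}
    {σ : n₁ ⊕ n₂ → ℝ}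
    (hP : (-(A * diagonal (fun i => (σ i : ℂ)) + diagonal (fun i => (σ i : ℂ)) * Aᴴ)).PosSemidef)
    (hQ : (-(Aᴴ * diagonal (fun i => (σ i : ℂ)) + diagonal (fun i => (σ i : ℂ)) * A)).PosSemidef)
    {x : n₁ ⊕ n₂ → ℂ} (h₁ : ∀ i, x (Sum.inl i) = 0) (h₂ : ∀ j, (A *ᵥ x) (Sum.inr j) = 0) :
    A *ᵥ diagonal (fun i => (σ i : ℂ)) *ᵥ diagonal (fun i => (σ i : ℂ)) *ᵥ x =
      diagonal (fun i => (σ i : ℂ)) *ᵥ diagonal (fun i => (σ i : ℂ)) *ᵥ A *ᵥ x := by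
  apply mulVec_mulVec_self_comm_of_posSemidef_neg (isHermitian_diagonal_ofReal σ) hP hQ <;>
    simp [-mulVec_mulVec, dotProduct, Fintype.sum_sum_type, mulVec_diagonal, h₁, h₂]

theorem Matrix.mulVec_diagonal_sq_comm_of_eq_smul_inl {A : Matrix (n₁ ⊕ n₂) (n₁ ⊕ n₂) ℂ}
    {σ : n₁ ⊕ n₂ → ℝ}
    (hP : (-(A * diagonal (fun i => (σ i : ℂ)) + diagonal (fun i => (σ i : ℂ)) * Aᴴ)).PosSemidef)
    (hQ : (-(Aᴴ * diagonal (fun i => (σ i : ℂ)) + diagonal (fun i => (σ i : ℂ)) * A)).PosSemidef)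
    {μ : ℂ} (hμ : μ.re = 0) {x : n₁ ⊕ n₂ → ℂ}
    (h₁ : ∀ i, (A *ᵥ x) (Sum.inl i) = μ * x (Sum.inl i)) (h₂ : ∀ j, (A *ᵥ x) (Sum.inr j) = 0) :
    A *ᵥ diagonal (fun i => (σ i : ℂ)) *ᵥ diagonal (fun i => (σ i : ℂ)) *ᵥ x =
      diagonal (fun i => (σ i : ℂ)) *ᵥ diagonal (fun i => (σ i : ℂ)) *ᵥ A *ᵥ x := by
  have hquad (w : n₁ ⊕ n₂ → ℝ) : (star x ⬝ᵥ diagonal (fun i => (w i : ℂ)) *ᵥ A *ᵥ x).re = 0 := by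
    rw [re_star_dotProduct_diagonal_mulVec_of_eq_smul_inl h₁ h₂, hμ, zero_mul]
  refine mulVec_mulVec_self_comm_of_posSemidef_neg (isHermitian_diagonal_ofReal σ) hP hQ
    (hquad σ).ge ?_
  have h₃ := hquad fun i => σ i * (σ i * σ i)
  push_cast at h₃
  rw [mulVec_mulVec (A *ᵥ x), mulVec_mulVec (A *ᵥ x), diagonal_mul_diagonal,
    diagonal_mul_diagonal]
  exact h₃.le

theorem Matrix.isUnit_toBlocks₂₂_of_lyapunov {A : Matrix (n₁ ⊕ n₂) (n₁ ⊕ n₂) ℂ}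
    {σ : n₁ ⊕ n₂ → ℝ} (hσ : ∀ i, 0 < σ i) (hA : ∀ μ ∈ spectrum ℂ A, μ.re < 0)
    (hP : (-(A * diagonal (fun i => (σ i : ℂ)) + diagonal (fun i => (σ i : ℂ)) * Aᴴ)).PosSemidef)
    (hQ : (-(Aᴴ * diagonal (fun i => (σ i : ℂ)) + diagonal (fun i => (σ i : ℂ)) * A)).PosSemidef)
    (hdisj : ∀ i j, σ (Sum.inl i) ≠ σ (Sum.inr j)) : IsUnit A.toBlocks₂₂ := by
  set D := diagonal (fun i => (σ i : ℂ))
  let E : Submodule ℂ (n₁ ⊕ n₂ → ℂ) := LinearMap.ker (LinearMap.funLeft ℂ ℂ Sum.inl) ⊓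
    LinearMap.ker (LinearMap.funLeft ℂ ℂ Sum.inr ∘ₗ A.toLin')
  have hmem : ∀ x, x ∈ E ↔ (∀ i, x (Sum.inl i) = 0) ∧ ∀ j, (A *ᵥ x) (Sum.inr j) = 0 := by
    intro x
    simp [E, funext_iff, LinearMap.funLeft_apply]
  by_contra h22
  obtain ⟨w, hw0, hw⟩ := exists_mulVec_eq_zero_iff.mpr
    (by simpa [isUnit_iff_isUnit_det] using h22 : A.toBlocks₂₂.det = 0)
  have hE : E ≠ ⊥ := by
    rw [Submodule.ne_bot_iff]
    refine ⟨Sum.elim 0 w, (hmem _).mpr ⟨fun i => rfl, fun j => ?_⟩, ?_⟩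
    · simp [mulVec_eq_sumElim_toBlocks A, hw]
    · simpa [funext_iff] using hw0
  have hcomm : ∀ x ∈ E, A *ᵥ D *ᵥ D *ᵥ x = D *ᵥ D *ᵥ A *ᵥ x := fun x hx =>
    mulVec_diagonal_sq_comm_of_inl_eq_zero hP hQ ((hmem x).mp hx).1 ((hmem x).mp hx).2
  have hmaps : ∀ x ∈ E, D *ᵥ D *ᵥ x ∈ E := by
    intro x hx
    have hx' := (hmem x).mp hx
    refine (hmem _).mpr ⟨fun i => ?_, fun j => ?_⟩
    · simp [-mulVec_mulVec, mulVec_diagonal, hx'.1, D]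
    · rw [hcomm x hx]
      simp [-mulVec_mulVec, mulVec_diagonal, hx'.2, D]
  have hsupp : ∀ x ∈ E, x ≠ 0 →
      ∃ k, x k ≠ 0 ∧ ∀ l, σ l = σ k → (A *ᵥ x) l = 0 * x l := by
    intro x hx hx0
    have hx' := (hmem x).mp hx
    obtain ⟨k, hk⟩ : ∃ k, x k ≠ 0 := Function.ne_iff.mp hx0
    refine ⟨k, hk, fun l hl => ?_⟩
    cases k with
    | inl i => exact absurd (hx'.1 i) hk
    | inr j =>
      cases l with
      | inl i => exact absurd hl (hdisj i j)
      | inr j' => simp [hx'.2 j']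
  simpa using hA 0 (mem_spectrum_of_commute_diagonal_sq hσ hE hmaps hcomm hsupp)

theorem Matrix.re_nonpos_of_mem_spectrum_schurComplement {A : Matrix (n₁ ⊕ n₂) (n₁ ⊕ n₂) ℂ}
    {σ : n₁ ⊕ n₂ → ℝ} (hσ : ∀ i, 0 < σ i)
    (hQ : (-(Aᴴ * diagonal (fun i => (σ i : ℂ)) + diagonal (fun i => (σ i : ℂ)) * A)).PosSemidef)
    (h22 : IsUnit A.toBlocks₂₂) {μ : ℂ}
    (hμ : μ ∈ spectrum ℂ (A.toBlocks₁₁ - A.toBlocks₁₂ * A.toBlocks₂₂⁻¹ * A.toBlocks₂₁)) :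
    μ.re ≤ 0 := by
  obtain ⟨p, hp0, hp⟩ := exists_mulVec_eq_smul_of_mem_spectrum hμ
  set x := Sum.elim p (-(A.toBlocks₂₂⁻¹ *ᵥ A.toBlocks₂₁ *ᵥ p))
  have hAx : A *ᵥ x = Sum.elim (μ • p) 0 := by rw [mulVec_sumElim_schurComplement h22, hp]
  have h_nonpos := re_star_dotProduct_mulVec_nonpos (M := diagonal (fun i => (σ i : ℂ)) * A)
    (by rwa [conjTranspose_mul, (isHermitian_diagonal_ofReal σ).eq]) x
  rw [← mulVec_mulVec, re_star_dotProduct_diagonal_mulVec_of_eq_smul_inl (μ := μ)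
    (fun i => by rw [hAx]; rfl) (fun j => by rw [hAx]; rfl) σ] at h_nonpos
  have h_pos : 0 < ∑ i, σ (Sum.inl i) * Complex.normSq (x (Sum.inl i)) := by
    obtain ⟨i, hi⟩ : ∃ i, p i ≠ 0 := Function.ne_iff.mp hp0
    exact Finset.sum_pos' (fun i _ => mul_nonneg (hσ _).le (Complex.normSq_nonneg _))
      ⟨i, Finset.mem_univ _, mul_pos (hσ _) (Complex.normSq_pos.mpr hi)⟩
  exact nonpos_of_mul_nonpos_left h_nonpos h_pos

theorem Matrix.re_lt_zero_of_mem_spectrum_schurComplement {A : Matrix (n₁ ⊕ n₂) (n₁ ⊕ n₂) ℂ}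
    {σ : n₁ ⊕ n₂ → ℝ} (hσ : ∀ i, 0 < σ i) (hA : ∀ μ ∈ spectrum ℂ A, μ.re < 0)
    (hP : (-(A * diagonal (fun i => (σ i : ℂ)) + diagonal (fun i => (σ i : ℂ)) * Aᴴ)).PosSemidef)
    (hQ : (-(Aᴴ * diagonal (fun i => (σ i : ℂ)) + diagonal (fun i => (σ i : ℂ)) * A)).PosSemidef)
    (hdisj : ∀ i j, σ (Sum.inl i) ≠ σ (Sum.inr j)) (h22 : IsUnit A.toBlocks₂₂) {μ : ℂ}
    (hμ : μ ∈ spectrum ℂ (A.toBlocks₁₁ - A.toBlocks₁₂ * A.toBlocks₂₂⁻¹ * A.toBlocks₂₁)) :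
    μ.re < 0 := by
  refine (re_nonpos_of_mem_spectrum_schurComplement hσ hQ h22 hμ).lt_of_ne fun hμ_re => ?_
  set D := diagonal (fun i => (σ i : ℂ))
  let E : Submodule ℂ (n₁ ⊕ n₂ → ℂ) :=
    LinearMap.ker (LinearMap.funLeft ℂ ℂ Sum.inl ∘ₗ (A.toLin' - μ • LinearMap.id)) ⊓
      LinearMap.ker (LinearMap.funLeft ℂ ℂ Sum.inr ∘ₗ A.toLin')
  have hmem : ∀ x, x ∈ E ↔
      (∀ i, (A *ᵥ x) (Sum.inl i) = μ * x (Sum.inl i)) ∧ ∀ j, (A *ᵥ x) (Sum.inr j) = 0 := by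
    intro x
    simp [E, funext_iff, LinearMap.funLeft_apply, sub_eq_zero]
  obtain ⟨p, hp0, hp⟩ := exists_mulVec_eq_smul_of_mem_spectrum hμ
  have hE : E ≠ ⊥ := by
    rw [Submodule.ne_bot_iff]
    refine ⟨Sum.elim p (-(A.toBlocks₂₂⁻¹ *ᵥ A.toBlocks₂₁ *ᵥ p)), ?_, ?_⟩
    · rw [hmem, mulVec_sumElim_schurComplement h22, hp]
      simp
    · exact fun h => hp0 (by ext i; simpa using congrFun h (Sum.inl i))
  have hcomm : ∀ x ∈ E, A *ᵥ D *ᵥ D *ᵥ x = D *ᵥ D *ᵥ A *ᵥ x := fun x hx =>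
    mulVec_diagonal_sq_comm_of_eq_smul_inl hP hQ hμ_re ((hmem x).mp hx).1 ((hmem x).mp hx).2
  have hmaps : ∀ x ∈ E, D *ᵥ D *ᵥ x ∈ E := by
    intro x hx
    have hx' := (hmem x).mp hx
    refine (hmem _).mpr ⟨fun i => ?_, fun j => ?_⟩ <;> rw [hcomm x hx]
    · simp [-mulVec_mulVec, mulVec_diagonal, hx'.1, D]
      ring
    · simp [-mulVec_mulVec, mulVec_diagonal, hx'.2, D]
  have hsupp : ∀ x ∈ E, x ≠ 0 → ∃ k, x k ≠ 0 ∧ ∀ l, σ l = σ k → (A *ᵥ x) l = μ * x l := by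
    intro x hx hx0
    have hx' := (hmem x).mp hx
    obtain ⟨i, hi⟩ : ∃ i, x (Sum.inl i) ≠ 0 := by
      by_contra! h
      have hAx : A *ᵥ x = (0 : ℂ) • x := by
        ext k
        cases k with
        | inl i => simp [hx'.1, h]
        | inr j => simp [hx'.2]
      simpa using hA 0 (mem_spectrum_of_mulVec_eq_smul hx0 hAx)
    refine ⟨Sum.inl i, hi, fun l hl => ?_⟩
    cases l with
    | inl i' => exact hx'.1 i'
    | inr j => exact absurd hl.symm (hdisj i j)
  exact (hA μ (mem_spectrum_of_commute_diagonal_sq hσ hE hmaps hcomm hsupp)).ne hμ_re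

end Blocks

theorem balanced_schurComplement_hurwitz_general
    (d₁ d₂ m l : ℕ)
    (A : Matrix (Fin d₁ ⊕ Fin d₂) (Fin d₁ ⊕ Fin d₂) ℂ)
    (N : Fin m → Matrix (Fin d₁ ⊕ Fin d₂) (Fin d₁ ⊕ Fin d₂) ℂ)
    (B : Matrix (Fin d₁ ⊕ Fin d₂) (Fin m) ℂ)
    (C : Matrix (Fin l) (Fin d₁ ⊕ Fin d₂) ℂ)
    (σ : Fin d₁ ⊕ Fin d₂ → ℝ) (hσ : ∀ i, 0 < σ i)
    (hHurwitz : ∀ μ ∈ spectrum ℂ A, μ.re < 0)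
    (hLyapP : A * Matrix.diagonal (fun i => (σ i : ℂ)) +
        Matrix.diagonal (fun i => (σ i : ℂ)) * Aᴴ +
        (∑ k, N k * Matrix.diagonal (fun i => (σ i : ℂ)) * (N k)ᴴ) + B * Bᴴ = 0)
    (hLyapQ : Aᴴ * Matrix.diagonal (fun i => (σ i : ℂ)) +
        Matrix.diagonal (fun i => (σ i : ℂ)) * A +
        (∑ k, (N k)ᴴ * Matrix.diagonal (fun i => (σ i : ℂ)) * N k) + Cᴴ * C = 0)
    (hdisj : ∀ (i : Fin d₁) (j : Fin d₂), σ (Sum.inl i) ≠ σ (Sum.inr j)) :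
    IsUnit A.toBlocks₂₂ ∧
      ∀ μ ∈ spectrum ℂ (A.toBlocks₁₁ - A.toBlocks₁₂ * A.toBlocks₂₂⁻¹ * A.toBlocks₂₁),
        μ.re < 0 := by
  have hD : (diagonal fun i => (σ i : ℂ)).PosSemidef :=
    (PosDef.diagonal fun i => Complex.zero_lt_real.mpr (hσ i)).posSemidef
  have hP := posSemidef_neg_of_lyapunov_eq N B hD hLyapP
  have hQ := posSemidef_neg_of_lyapunov_eq (A := Aᴴ) (fun k => (N k)ᴴ) Cᴴ hD
    (by simp only [conjTranspose_conjTranspose]; exact hLyapQ)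
  rw [conjTranspose_conjTranspose] at hQ
  have h22 := isUnit_toBlocks₂₂_of_lyapunov hσ hHurwitz hP hQ hdisj
  exact ⟨h22, fun μ hμ =>
    re_lt_zero_of_mem_spectrum_schurComplement hσ hHurwitz hP hQ hdisj h22 hμ⟩

/-- Stability of the lower-right block of a balanced bilinear system:
if the system `(A, N₁, …, N_m, B, C)` is balanced with Hankel singular value
matrix `Σ = diagonal σ` (all `σ i > 0`), `A` is Hurwitz, `(A, B)` is
controllable, `(A, C)` is observable, and the two groups of singular values
are disjoint, then `A₂₂` is invertible and the Schur complement
`A₁₁ − A₁₂ A₂₂⁻¹ A₂₁` is Hurwitz. -/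
theorem balanced_schurComplement_hurwitz
    (d₁ d₂ m l : ℕ) (hd₁ : 1 ≤ d₁) (hd₂ : 1 ≤ d₂)
    (A : Matrix (Fin d₁ ⊕ Fin d₂) (Fin d₁ ⊕ Fin d₂) ℂ)
    (N : Fin m → Matrix (Fin d₁ ⊕ Fin d₂) (Fin d₁ ⊕ Fin d₂) ℂ)
    (B : Matrix (Fin d₁ ⊕ Fin d₂) (Fin m) ℂ)
    (C : Matrix (Fin l) (Fin d₁ ⊕ Fin d₂) ℂ)
    (σ : Fin d₁ ⊕ Fin d₂ → ℝ) (hσ : ∀ i, 0 < σ i)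
    (hHurwitz : ∀ μ ∈ spectrum ℂ A, μ.re < 0)
    (hLyapP : A * Matrix.diagonal (fun i => (σ i : ℂ)) +
        Matrix.diagonal (fun i => (σ i : ℂ)) * Aᴴ +
        (∑ k, N k * Matrix.diagonal (fun i => (σ i : ℂ)) * (N k)ᴴ) + B * Bᴴ = 0)
    (hLyapQ : Aᴴ * Matrix.diagonal (fun i => (σ i : ℂ)) +
        Matrix.diagonal (fun i => (σ i : ℂ)) * A +
        (∑ k, (N k)ᴴ * Matrix.diagonal (fun i => (σ i : ℂ)) * N k) + Cᴴ * C = 0)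
    (hctrb : (Matrix.of fun (i : Fin d₁ ⊕ Fin d₂) (p : Fin (d₁ + d₂) × Fin m) =>
        (A ^ (p.1 : ℕ) * B) i p.2).rank = d₁ + d₂)
    (hobs : (Matrix.of fun (i : Fin d₁ ⊕ Fin d₂) (p : Fin (d₁ + d₂) × Fin l) =>
        (Aᴴ ^ (p.1 : ℕ) * Cᴴ) i p.2).rank = d₁ + d₂)
    (hdisj : ∀ (i : Fin d₁) (j : Fin d₂), σ (Sum.inl i) ≠ σ (Sum.inr j)) :
    IsUnit A.toBlocks₂₂ ∧
      ∀ μ ∈ spectrum ℂ (A.toBlocks₁₁ - A.toBlocks₁₂ * A.toBlocks₂₂⁻¹ * A.toBlocks₂₁),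
        μ.re < 0 :=
  balanced_schurComplement_hurwitz_general d₁ d₂ m l A N B C σ hσ hHurwitz hLyapP hLyapQ hdisj
end

section
/- Let A, X, D ∈ ℂ^{n×n} and B ∈ ℂ^{n×m} with X Hermitian and D Hermitian positive semidefinite, and suppose A X + X A* + D + B B* = 0. If v ∈ ℂⁿ satisfies A* v = iσ v for some real number σ, then v* D v = 0 and B* v = 0. -/
open Matrix ComplexOrder

/-!
Sandwich the equation between `v*` and `v`. Since `A* v = μ v`, the two Lyapunov terms contribute
`(μ̄ + μ) v* X v`, which vanishes for purely imaginary `μ`. What remains is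
`v* D v + ‖B* v‖² = 0`, a sum of two nonnegative numbers, so both vanish.
-/

namespace Matrix

variable {ι κ R : Type*} [Fintype ι] [Fintype κ]

section CommRing

variable [CommRing R] [StarRing R]

lemma star_dotProduct_mul_add_mul_conjTranspose_mulVec {A : Matrix ι ι R} {v : ι → R} {μ : R}
    (hv : Aᴴ *ᵥ v = μ • v) (X : Matrix ι ι R) :
    star v ⬝ᵥ ((A * X + X * Aᴴ) *ᵥ v) = (star μ + μ) * (star v ⬝ᵥ (X *ᵥ v)) := by
  have hvA : star v ᵥ* A = star μ • star v := by
    rw [← conjTranspose_conjTranspose A, ← star_mulVec, hv, star_smul]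
  rw [add_mulVec, dotProduct_add, ← mulVec_mulVec, ← mulVec_mulVec, dotProduct_mulVec, hvA, hv,
    smul_dotProduct, mulVec_smul, dotProduct_smul, smul_eq_mul, smul_eq_mul, add_mul]

lemma star_dotProduct_mul_conjTranspose_mulVec (B : Matrix ι κ R) (v : ι → R) :
    star v ⬝ᵥ ((B * Bᴴ) *ᵥ v) = star (Bᴴ *ᵥ v) ⬝ᵥ (Bᴴ *ᵥ v) := by
  rw [← mulVec_mulVec, dotProduct_mulVec, star_mulVec, conjTranspose_conjTranspose]

end CommRing

variable [CommRing R] [PartialOrder R] [StarRing R] [StarOrderedRing R] [NoZeroDivisors R]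

theorem star_dotProduct_mulVec_eq_zero_and_conjTranspose_mulVec_eq_zero_of_lyapunov
    {A D : Matrix ι ι R} {B : Matrix ι κ R} (X : Matrix ι ι R) (hD : D.PosSemidef)
    (h : A * X + X * Aᴴ + D + B * Bᴴ = 0) {v : ι → R} {μ : R} (hμ : star μ = -μ)
    (hv : Aᴴ *ᵥ v = μ • v) :
    star v ⬝ᵥ (D *ᵥ v) = 0 ∧ Bᴴ *ᵥ v = 0 := by
  have hsum : star v ⬝ᵥ (D *ᵥ v) + star v ⬝ᵥ ((B * Bᴴ) *ᵥ v) = 0 := by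
    simpa only [add_mulVec _ D, add_mulVec _ (B * Bᴴ), dotProduct_add, zero_mulVec,
      dotProduct_zero, star_dotProduct_mul_add_mul_conjTranspose_mulVec hv, hμ, neg_add_cancel,
      zero_mul, zero_add] using congrArg (fun M ↦ star v ⬝ᵥ (M *ᵥ v)) h
  have hBB := (posSemidef_self_mul_conjTranspose B).dotProduct_mulVec_nonneg v
  obtain ⟨hDv, hBv⟩ := (add_eq_zero_iff_of_nonneg (hD.dotProduct_mulVec_nonneg v) hBB).mp hsum
  rw [star_dotProduct_mul_conjTranspose_mulVec, dotProduct_star_self_eq_zero] at hBv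
  exact ⟨hDv, hBv⟩

end Matrix

theorem lyapunov_imaginary_eigenvector_general {n m : ℕ}
    (A X D : Matrix (Fin n) (Fin n) ℂ) (B : Matrix (Fin n) (Fin m) ℂ)
    (hD : D.PosSemidef)
    (h : A * X + X * Aᴴ + D + B * Bᴴ = 0)
    (v : Fin n → ℂ) (σ : ℝ) (hv : Aᴴ *ᵥ v = (Complex.I * σ) • v) :
    star v ⬝ᵥ (D *ᵥ v) = 0 ∧ Bᴴ *ᵥ v = 0 :=
  star_dotProduct_mulVec_eq_zero_and_conjTranspose_mulVec_eq_zero_of_lyapunov X hD h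
    (by simp [Complex.conj_ofReal]) hv

/-- If `X` is Hermitian, `D` is Hermitian positive semidefinite and
`A X + X A* + D + B B* = 0`, then any eigenvector `v` of `A*` to a purely
imaginary eigenvalue `iσ` satisfies `v* D v = 0` and `B* v = 0`. -/
theorem lyapunov_imaginary_eigenvector {n m : ℕ}
    (A X D : Matrix (Fin n) (Fin n) ℂ) (B : Matrix (Fin n) (Fin m) ℂ)
    (hX : X.IsHermitian) (hD : D.PosSemidef)
    (h : A * X + X * Aᴴ + D + B * Bᴴ = 0)
    (v : Fin n → ℂ) (σ : ℝ) (hv : Aᴴ *ᵥ v = (Complex.I * σ) • v) :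
    star v ⬝ᵥ (D *ᵥ v) = 0 ∧ Bᴴ *ᵥ v = 0 :=
  lyapunov_imaginary_eigenvector_general A X D B hD h v σ hv
end

section
/- Let A, N₁, …, N_m ∈ ℂ^{n×n} with A invertible, B ∈ ℂ^{n×m}, and let Σ ∈ ℂ^{n×n} satisfy the generalized controllability Lyapunov equation A Σ + Σ A* + Σ_{k=1}^m N_k Σ N_k* + B B* = 0. Then the reciprocal system coefficients (A⁻¹, A⁻¹N₁, …, A⁻¹N_m, A⁻¹B) satisfy the same generalized Lyapunov equation with the same Gramian Σ, i.e. A⁻¹ Σ + Σ (A⁻¹)* + Σ_{k=1}^m (A⁻¹N_k) Σ (A⁻¹N_k)* + (A⁻¹B)(A⁻¹B)* = 0. -/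
open Matrix

/-- If `Σ` solves the generalized controllability Lyapunov equation for the
bilinear system `(A, N₁, …, N_m, B)` and `A` is invertible, then the
reciprocal system `(A⁻¹, A⁻¹N₁, …, A⁻¹N_m, A⁻¹B)` satisfies the same
generalized Lyapunov equation with the same Gramian `Σ`. -/
theorem reciprocal_system_lyapunov {n m : ℕ}
    (A : Matrix (Fin n) (Fin n) ℂ) (hA : IsUnit A)
    (N : Fin m → Matrix (Fin n) (Fin n) ℂ)
    (B : Matrix (Fin n) (Fin m) ℂ)
    (S : Matrix (Fin n) (Fin n) ℂ)
    (hLyap : A * S + S * Aᴴ + (∑ k, N k * S * (N k)ᴴ) + B * Bᴴ = 0) :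
    A⁻¹ * S + S * (A⁻¹)ᴴ + (∑ k, (A⁻¹ * N k) * S * (A⁻¹ * N k)ᴴ) +
      (A⁻¹ * B) * (A⁻¹ * B)ᴴ = 0 := by
  have hinv : A⁻¹ * A = 1 := nonsing_inv_mul A ((isUnit_iff_isUnit_det A).mp hA)
  have hinvH : Aᴴ * (A⁻¹)ᴴ = 1 := by
    rw [← conjTranspose_mul, hinv, conjTranspose_one]
  have h := congrArg (fun X => A⁻¹ * X * (A⁻¹)ᴴ) hLyap
  simp only [mul_zero, zero_mul, add_mul, mul_add, Finset.mul_sum,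
    Finset.sum_mul, conjTranspose_mul, Matrix.mul_assoc] at h ⊢
  rw [← mul_assoc A⁻¹ A, hinv, one_mul, hinvH, mul_one,
    add_comm (S * (A⁻¹)ᴴ) (A⁻¹ * S)] at h
  simpa only [Matrix.mul_assoc] using h
end

section
/- Let A, N₁, …, N_m, P, Q ∈ ℂ^{n×n}, B ∈ ℂ^{n×m}, C ∈ ℂ^{l×n}. Suppose P solves the generalized controllability Lyapunov equation A P + P A* + Σ_{k=1}^m N_k P N_k* + B B* = 0 and Q solves the generalized observability Lyapunov equation A* Q + Q A + Σ_{k=1}^m N_k* Q N_k + C* C = 0. Then trace(C P C*) = trace(B* Q B). -/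
open Matrix

/-- If `P` and `Q` are the controllability and observability Gramians of the
bilinear system `(A, N₁, …, N_m, B, C)`, i.e. solutions of the generalized
Lyapunov equations, then `trace (C P C*) = trace (B* Q B)` (the squared
`H₂`-norm of the system). -/
theorem h2norm_trace_eq {n m l : ℕ}
    (A P Q : Matrix (Fin n) (Fin n) ℂ)
    (N : Fin m → Matrix (Fin n) (Fin n) ℂ)
    (B : Matrix (Fin n) (Fin m) ℂ)
    (C : Matrix (Fin l) (Fin n) ℂ)
    (hP : A * P + P * Aᴴ + (∑ k, N k * P * (N k)ᴴ) + B * Bᴴ = 0)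
    (hQ : Aᴴ * Q + Q * A + (∑ k, (N k)ᴴ * Q * N k) + Cᴴ * C = 0) :
    (C * P * Cᴴ).trace = (Bᴴ * Q * B).trace := by
  have hBB : B * Bᴴ = -(A * P + P * Aᴴ + (∑ k, N k * P * (N k)ᴴ)) := by
    rw [eq_neg_iff_add_eq_zero, add_comm]; exact hP
  have hCC : Cᴴ * C = -(Aᴴ * Q + Q * A + (∑ k, (N k)ᴴ * Q * N k)) := by
    rw [eq_neg_iff_add_eq_zero, add_comm]; exact hQ
  have h1 : (C * P * Cᴴ).trace = (P * (Cᴴ * C)).trace := by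
    calc (C * P * Cᴴ).trace = (Cᴴ * (C * P)).trace := trace_mul_comm (C * P) Cᴴ
      _ = (P * (Cᴴ * C)).trace := by
          rw [← Matrix.mul_assoc Cᴴ C P]; exact (trace_mul_comm (Cᴴ * C) P)
  have h2 : (Bᴴ * Q * B).trace = (Q * (B * Bᴴ)).trace := by
    calc (Bᴴ * Q * B).trace = (B * (Bᴴ * Q)).trace := trace_mul_comm (Bᴴ * Q) B
      _ = (Q * (B * Bᴴ)).trace := by
          rw [← Matrix.mul_assoc B Bᴴ Q]; exact (trace_mul_comm (B * Bᴴ) Q)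
  rw [h1, h2, hBB, hCC]
  simp only [mul_neg, trace_neg, mul_add, trace_add, Finset.mul_sum, trace_sum]
  have e1 : (P * (Aᴴ * Q)).trace = (Q * (P * Aᴴ)).trace := by
    rw [← mul_assoc]; exact trace_mul_comm (P * Aᴴ) Q
  have e2 : (P * (Q * A)).trace = (Q * (A * P)).trace := by
    rw [← mul_assoc P Q A, trace_mul_comm (P * Q) A, ← mul_assoc A P Q]
    exact trace_mul_comm (A * P) Q
  have e3 : ∀ k : Fin m, (P * ((N k)ᴴ * Q * N k)).trace = (Q * (N k * P * (N k)ᴴ)).trace := by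
    intro k
    calc (P * ((N k)ᴴ * Q * N k)).trace
        = ((P * (N k)ᴴ) * (Q * N k)).trace := by
          rw [mul_assoc ((N k)ᴴ) Q (N k), ← mul_assoc P ((N k)ᴴ) (Q * N k)]
      _ = ((Q * N k) * (P * (N k)ᴴ)).trace := trace_mul_comm _ _
      _ = (Q * (N k * P * (N k)ᴴ)).trace := by
          rw [mul_assoc (N k) P ((N k)ᴴ), ← mul_assoc Q (N k) (P * (N k)ᴴ)]
  rw [e1, e2]
  rw [Finset.sum_congr rfl fun k _ => e3 k]
  ring
end

section
/- Let P, Q ∈ ℂ^{n×n} be Hermitian positive definite, and let S, R ∈ ℂ^{n×n} be invertible with P = S*S and Q = R*R. Let S R* = U Σ V* be a singular value decomposition with U, V ∈ ℂ^{n×n} unitary and Σ diagonal with strictly positive real diagonal entries, and set T = Σ^{-1/2} V* R. Then T is invertible with T⁻¹ = S* U Σ^{-1/2}, and T P T* = Σ = (T⁻¹)* Q T⁻¹; i.e. T is a balancing transformation making both Gramians equal to the diagonal matrix Σ of Hankel singular values. -/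
open Matrix ComplexOrder

/-!
With `T = d v* r` and `T' = s* u d`, where `d = Σ^{-1/2}`, every product to be computed collapses
through `s r* = u Σ v*` and its adjoint `r s* = v Σ u*` and the unitarity of `u`, `v`:
`T T' = d Σ d = 1`, while `T (s* s) T*` and `T'* (r* r) T'` both equal `d Σ Σ d = Σ`.
Only `d Σ d = 1` uses that `Σ` is diagonal; the rest holds in any star monoid.
-/

theorem Commute.mul_mul_self_mul_eq {M : Type*} [Monoid M] {d σ : M} (hdσ : Commute d σ)
    (hdσd : d * σ * d = 1) :
    d * σ * σ * d = σ :=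
  calc d * σ * σ * d = σ * d * σ * d := by rw [hdσ.eq]
    _ = σ * (d * σ * d) := by simp only [mul_assoc]
    _ = σ := by rw [hdσd, mul_one]

namespace Balancing

variable {A : Type*} [Monoid A] [StarMul A] {s r u v σ d : A}

theorem mul_star_eq_of_svd (hσ : IsSelfAdjoint σ) (h : s * star r = u * σ * star v) :
    r * star s = v * σ * star u := by
  simpa only [star_mul, star_star, hσ.star_eq, mul_assoc] using congrArg star h

theorem transform_mul_inverse_eq_one (hu : u ∈ unitary A) (hv : v ∈ unitary A) (hσ : IsSelfAdjoint σ)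
    (h : s * star r = u * σ * star v) (hdσd : d * σ * d = 1) :
    (d * star v * r) * (star s * u * d) = 1 :=
  calc (d * star v * r) * (star s * u * d) = d * star v * (r * star s) * u * d := by
        simp only [mul_assoc]
    _ = d * (star v * v) * σ * (star u * u) * d := by
        rw [mul_star_eq_of_svd hσ h]; simp only [mul_assoc]
    _ = 1 := by
        rw [Unitary.star_mul_self_of_mem hu, Unitary.star_mul_self_of_mem hv, mul_one, mul_one,
          hdσd]

theorem transform_mul_star_mul_self_mul_star_eq (hu : u ∈ unitary A) (hv : v ∈ unitary A)
    (hσ : IsSelfAdjoint σ) (hd : IsSelfAdjoint d) (hdσ : Commute d σ)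
    (h : s * star r = u * σ * star v) (hdσd : d * σ * d = 1) :
    (d * star v * r) * (star s * s) * star (d * star v * r) = σ :=
  calc (d * star v * r) * (star s * s) * star (d * star v * r)
        = d * star v * (r * star s) * (s * star r) * v * d := by
        simp only [star_mul, star_star, hd.star_eq, mul_assoc]
    _ = d * (star v * v) * σ * (star u * u) * σ * (star v * v) * d := by
        rw [mul_star_eq_of_svd hσ h, h]; simp only [mul_assoc]
    _ = σ := by
        simp only [Unitary.star_mul_self_of_mem hu, Unitary.star_mul_self_of_mem hv, mul_one]
        exact hdσ.mul_mul_self_mul_eq hdσd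

theorem star_inverse_mul_star_mul_self_mul_inverse_eq (hu : u ∈ unitary A) (hv : v ∈ unitary A)
    (hσ : IsSelfAdjoint σ) (hd : IsSelfAdjoint d) (hdσ : Commute d σ)
    (h : s * star r = u * σ * star v) (hdσd : d * σ * d = 1) :
    star (star s * u * d) * (star r * r) * (star s * u * d) = σ :=
  calc star (star s * u * d) * (star r * r) * (star s * u * d)
        = d * star u * (s * star r) * (r * star s) * u * d := by
        simp only [star_mul, star_star, hd.star_eq, mul_assoc]
    _ = d * (star u * u) * σ * (star v * v) * σ * (star u * u) * d := by
        rw [mul_star_eq_of_svd hσ h, h]; simp only [mul_assoc]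
    _ = σ := by
        simp only [Unitary.star_mul_self_of_mem hu, Unitary.star_mul_self_of_mem hv, mul_one]
        exact hdσ.mul_mul_self_mul_eq hdσd

end Balancing

theorem Matrix.isSelfAdjoint_diagonal_ofReal {m : Type*} [DecidableEq m] (f : m → ℝ) :
    IsSelfAdjoint (diagonal fun i => (f i : ℂ)) := by
  rw [← isHermitian_iff_isSelfAdjoint, isHermitian_diagonal_iff]
  exact fun i => Complex.conj_ofReal (f i)

theorem Matrix.diagonal_inv_sqrt_mul_diagonal_mul_diagonal_inv_sqrt {m : Type*} [Fintype m]
    [DecidableEq m] {σ : m → ℝ} (hσ : ∀ i, 0 < σ i) :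
    diagonal (fun i => ((Real.sqrt (σ i))⁻¹ : ℂ)) * diagonal (fun i => (σ i : ℂ)) *
      diagonal (fun i => ((Real.sqrt (σ i))⁻¹ : ℂ)) = 1 := by
  rw [diagonal_mul_diagonal, diagonal_mul_diagonal, ← diagonal_one]
  congr 1
  funext i
  have hsqrt : (Real.sqrt (σ i) : ℂ) ≠ 0 := by exact_mod_cast (Real.sqrt_pos.2 (hσ i)).ne'
  have hsq : (σ i : ℂ) = (Real.sqrt (σ i) : ℂ) ^ 2 := by
    rw [← Complex.ofReal_pow, Real.sq_sqrt (hσ i).le]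
  rw [hsq]
  field_simp

theorem balancing_transformation_general {n : ℕ}
    (P Q S R U V : Matrix (Fin n) (Fin n) ℂ)
    (hPS : P = Sᴴ * S) (hQR : Q = Rᴴ * R)
    (hU : U ∈ Matrix.unitaryGroup (Fin n) ℂ)
    (hV : V ∈ Matrix.unitaryGroup (Fin n) ℂ)
    (σ : Fin n → ℝ) (hσ : ∀ i, 0 < σ i)
    (hSVD : S * Rᴴ = U * Matrix.diagonal (fun i => (σ i : ℂ)) * Vᴴ) :
    IsUnit (Matrix.diagonal (fun i => ((Real.sqrt (σ i))⁻¹ : ℂ)) * Vᴴ * R) ∧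
    (Matrix.diagonal (fun i => ((Real.sqrt (σ i))⁻¹ : ℂ)) * Vᴴ * R)⁻¹ =
      Sᴴ * U * Matrix.diagonal (fun i => ((Real.sqrt (σ i))⁻¹ : ℂ)) ∧
    (Matrix.diagonal (fun i => ((Real.sqrt (σ i))⁻¹ : ℂ)) * Vᴴ * R) * P *
        (Matrix.diagonal (fun i => ((Real.sqrt (σ i))⁻¹ : ℂ)) * Vᴴ * R)ᴴ =
      Matrix.diagonal (fun i => (σ i : ℂ)) ∧
    ((Matrix.diagonal (fun i => ((Real.sqrt (σ i))⁻¹ : ℂ)) * Vᴴ * R)⁻¹)ᴴ * Q *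
        (Matrix.diagonal (fun i => ((Real.sqrt (σ i))⁻¹ : ℂ)) * Vᴴ * R)⁻¹ =
      Matrix.diagonal (fun i => (σ i : ℂ)) := by
  set D : Matrix (Fin n) (Fin n) ℂ := diagonal fun i => ((Real.sqrt (σ i))⁻¹ : ℂ)
  set Sig : Matrix (Fin n) (Fin n) ℂ := diagonal fun i => (σ i : ℂ)
  have hSig : IsSelfAdjoint Sig := isSelfAdjoint_diagonal_ofReal σ
  have hD : IsSelfAdjoint D := by
    simpa only [Complex.ofReal_inv] using isSelfAdjoint_diagonal_ofReal fun i => (Real.sqrt (σ i))⁻¹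
  have hDSigD : D * Sig * D = 1 := diagonal_inv_sqrt_mul_diagonal_mul_diagonal_inv_sqrt hσ
  have hDSig : Commute D Sig := commute_diagonal _ _
  have hTT' : (D * Vᴴ * R) * (Sᴴ * U * D) = 1 :=
    Balancing.transform_mul_inverse_eq_one hU hV hSig hSVD hDSigD
  have hinv := inv_eq_right_inv hTT'
  refine ⟨(isUnit_iff_isUnit_det _).2 (isUnit_det_of_right_inverse hTT'), hinv, ?_, ?_⟩
  · rw [hPS]
    exact Balancing.transform_mul_star_mul_self_mul_star_eq hU hV hSig hD hDSig hSVD hDSigD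
  · rw [hinv, hQR]
    exact Balancing.star_inverse_mul_star_mul_self_mul_inverse_eq hU hV hSig hD hDSig hSVD hDSigD

/-- Construction of a balancing transformation: if `P = S*S` and `Q = R*R`
are Hermitian positive definite Gramians with `S`, `R` invertible, and
`S R* = U Σ V*` is a singular value decomposition (`U`, `V` unitary, `Σ`
diagonal with strictly positive real entries `σ i`), then
`T = Σ^{-1/2} V* R` is invertible with `T⁻¹ = S* U Σ^{-1/2}`, and
`T P T* = Σ = (T⁻¹)* Q T⁻¹`. -/
theorem balancing_transformation {n : ℕ}
    (P Q S R U V : Matrix (Fin n) (Fin n) ℂ)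
    (hP : P.PosDef) (hQ : Q.PosDef)
    (hS : IsUnit S) (hR : IsUnit R)
    (hPS : P = Sᴴ * S) (hQR : Q = Rᴴ * R)
    (hU : U ∈ Matrix.unitaryGroup (Fin n) ℂ)
    (hV : V ∈ Matrix.unitaryGroup (Fin n) ℂ)
    (σ : Fin n → ℝ) (hσ : ∀ i, 0 < σ i)
    (hSVD : S * Rᴴ = U * Matrix.diagonal (fun i => (σ i : ℂ)) * Vᴴ) :
    IsUnit (Matrix.diagonal (fun i => ((Real.sqrt (σ i))⁻¹ : ℂ)) * Vᴴ * R) ∧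
    (Matrix.diagonal (fun i => ((Real.sqrt (σ i))⁻¹ : ℂ)) * Vᴴ * R)⁻¹ =
      Sᴴ * U * Matrix.diagonal (fun i => ((Real.sqrt (σ i))⁻¹ : ℂ)) ∧
    (Matrix.diagonal (fun i => ((Real.sqrt (σ i))⁻¹ : ℂ)) * Vᴴ * R) * P *
        (Matrix.diagonal (fun i => ((Real.sqrt (σ i))⁻¹ : ℂ)) * Vᴴ * R)ᴴ =
      Matrix.diagonal (fun i => (σ i : ℂ)) ∧
    ((Matrix.diagonal (fun i => ((Real.sqrt (σ i))⁻¹ : ℂ)) * Vᴴ * R)⁻¹)ᴴ * Q *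
        (Matrix.diagonal (fun i => ((Real.sqrt (σ i))⁻¹ : ℂ)) * Vᴴ * R)⁻¹ =
      Matrix.diagonal (fun i => (σ i : ℂ)) :=
  balancing_transformation_general P Q S R U V hPS hQR hU hV σ hσ hSVD
end
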